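/- The discrete vector field W = W_Ā ∪ W_B̄ ∪ W' on X̃ is acyclic; that is, W is a gradient vector field on X̃. -/
import Mathlib


open scoped Classical

noncomputable section

namespace DMT

variable {V : Type*} {U : Type*}

/-- An abstract simplicial complex: a nonempty collection of nonempty finite
sets of vertices that is closed under taking nonempty subsets. -/
def IsComplex (K : Set (Finset V)) : Prop :=
  K.Nonempty ∧ ∀ σ ∈ K, σ.Nonempty ∧ ∀ τ : Finset V, τ ⊆ σ → τ.Nonempty → τ ∈ K

/-- The incidence number `⟨τ, σ⟩` of `σ` with respect to `τ`, where simplices are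
oriented by listing their vertices increasingly: it is `(-1)^i` if `σ` is obtained
from `τ` by deleting the `i`-th vertex, and `0` if `σ` is not a facet of `τ`. -/
def incidence [LinearOrder V] (τ σ : Finset V) : ℤ :=
  if σ ⊆ τ ∧ τ.card = σ.card + 1 then
    ∑ v ∈ τ \ σ, (-1 : ℤ) ^ (τ.filter fun u => u < v).card
  else 0

/-- A discrete vector field on a complex `K`: a set of pairs `(σ, τ)` of simplices of `K`
with `σ` a facet of `τ`, such that every simplex appears in at most one pair. -/
def IsDVF (K : Set (Finset U)) (W : Set (Finset U × Finset U)) : Prop :=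
  (∀ p ∈ W, p.1 ∈ K ∧ p.2 ∈ K ∧ p.1 ⊆ p.2 ∧ p.2.card = p.1.card + 1) ∧
  ∀ p ∈ W, ∀ p' ∈ W, (p.1 = p'.1 ∨ p.1 = p'.2 ∨ p.2 = p'.1 ∨ p.2 = p'.2) → p = p'

/-- A simplex is critical for `W` if it appears in no pair of `W`. -/
def IsCritical (W : Set (Finset U × Finset U)) (σ : Finset U) : Prop :=
  ∀ p ∈ W, p.1 ≠ σ ∧ p.2 ≠ σ

/-- The set of `q`-dimensional `W`-critical simplices of `K`. -/
def critSet (K : Set (Finset U)) (W : Set (Finset U × Finset U)) (q : ℕ) : Set (Finset U) :=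
  {σ | σ ∈ K ∧ σ.card = q + 1 ∧ IsCritical W σ}

/-- A `W`-trajectory `τ₀, σ₁, τ₁, …, σ_k, τ_k`. -/
structure Traj (W : Set (Finset U × Finset U)) where
  k : ℕ
  t : ℕ → Finset U
  s : ℕ → Finset U
  dim_t : ∀ i ≤ k, (t i).card = (t 0).card
  dim_s : ∀ i, 1 ≤ i → i ≤ k → (s i).card + 1 = (t 0).card
  mem : ∀ i, 1 ≤ i → i ≤ k → (s i, t i) ∈ W
  sub : ∀ i, 1 ≤ i → i ≤ k → s i ⊆ t (i - 1)
  nmem : ∀ i, 1 ≤ i → i ≤ k → (s i, t (i - 1)) ∉ W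

/-- `W` is acyclic: there is no nontrivial closed `W`-trajectory. -/
def IsAcyclic (W : Set (Finset U × Finset U)) : Prop :=
  ¬ ∃ P : Traj W, 1 < P.k ∧ P.t 0 = P.t P.k

/-- A gradient vector field on `K`: an acyclic discrete vector field. -/
def IsGVF (K : Set (Finset U)) (W : Set (Finset U × Finset U)) : Prop :=
  IsDVF K W ∧ IsAcyclic W

/-- An extended `W`-trajectory `τ₀, σ₁, τ₁, …, σ_k, τ_k, σ_{k+1}`, with
`(σᵢ, τᵢ) ∈ W` for `1 ≤ i ≤ k`, and `σᵢ ⊆ τ_{i-1}`, `(σᵢ, τ_{i-1}) ∉ W` for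
`1 ≤ i ≤ k + 1`.  (The values of `t` and `s` outside the relevant ranges are
normalized to `∅`.) -/
structure ExtTraj (W : Set (Finset U × Finset U)) where
  k : ℕ
  t : ℕ → Finset U
  s : ℕ → Finset U
  dim_t : ∀ i ≤ k, (t i).card = (t 0).card
  dim_s : ∀ i, 1 ≤ i → i ≤ k + 1 → (s i).card + 1 = (t 0).card
  mem : ∀ i, 1 ≤ i → i ≤ k → (s i, t i) ∈ W
  sub : ∀ i, 1 ≤ i → i ≤ k + 1 → s i ⊆ t (i - 1)
  nmem : ∀ i, 1 ≤ i → i ≤ k + 1 → (s i, t (i - 1)) ∉ W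
  pad_t : ∀ i, k < i → t i = ∅
  pad_s : ∀ i, i = 0 ∨ k + 1 < i → s i = ∅

/-- The weight of an extended trajectory. -/
def ExtTraj.weight [LinearOrder U] {W : Set (Finset U × Finset U)} (P : ExtTraj W) : ℤ :=
  (∏ i ∈ Finset.range P.k,
      -(incidence (P.t i) (P.s (i + 1)) * incidence (P.t (i + 1)) (P.s (i + 1)))) *
    incidence (P.t P.k) (P.s (P.k + 1))

/-- `Γ(τ, σ)`: the extended `W`-trajectories with initial simplex `τ` and terminal
simplex `σ`. -/
def Gamma (W : Set (Finset U × Finset U)) (τ σ : Finset U) : Set (ExtTraj W) :=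
  {P | P.t 0 = τ ∧ P.s (P.k + 1) = σ}

/-- The Thom–Smale boundary coefficient `Σ_{P ∈ Γ(τ,σ)} w(P)`. -/
def tsCoeff [LinearOrder U] (W : Set (Finset U × Finset U)) (τ σ : Finset U) : ℤ :=
  ∑ᶠ P ∈ Gamma W τ σ, ExtTraj.weight P

/-- The copy of a complex under a vertex map. -/
def copy [DecidableEq U] (f : V → U) (K : Set (Finset V)) : Set (Finset U) :=
  {σ | ∃ γ ∈ K, σ = γ.image f}

/-- Pull a simplex of a copy back to the original vertex set. -/
def pull [Fintype V] [DecidableEq U] (f : V → U) (σ : Finset U) : Finset V :=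
  Finset.univ.filter fun v => f v ∈ σ

/-- The ground simplex of a simplex of the prism (with `a`-vertices and `b`-vertices). -/
def GS [Fintype V] [DecidableEq U] (a b : V → U) (σ : Finset U) : Finset V :=
  Finset.univ.filter fun v => a v ∈ σ ∨ b v ∈ σ

/-- The simplex `{a_{i₀}, …, a_{i_r}, b_{i_r}, …, b_{i_q}}` of the prism over
`γ = {v_{i₀} < … < v_{i_q}}`, with pivot `v = v_{i_r}`. -/
def mixA [LinearOrder V] [DecidableEq U] (a b : V → U) (γ : Finset V) (v : V) : Finset U :=
  (γ.filter fun u => u ≤ v).image a ∪ (γ.filter fun u => v ≤ u).image b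

/-- The simplex `{a_{i₀}, …, a_{i_{r-1}}, b_{i_r}, …, b_{i_q}}` of the prism over
`γ`, with pivot `v = v_{i_r}`. -/
def mixB [LinearOrder V] [DecidableEq U] (a b : V → U) (γ : Finset V) (v : V) : Finset U :=
  (γ.filter fun u => u < v).image a ∪ (γ.filter fun u => v ≤ u).image b

/-- `A_γ`. -/
def AsetOf [LinearOrder V] [DecidableEq U] (a b : V → U) (γ : Finset V) : Set (Finset U) :=
  {σ | ∃ v ∈ γ, σ = mixA a b γ v}

/-- `B_γ`. -/
def BsetOf [LinearOrder V] [DecidableEq U] (a b : V → U) (γ : Finset V) : Set (Finset U) :=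
  {σ | ∃ v ∈ γ, σ = mixB a b γ v} ∪ {γ.image a}

/-- `S_γ = A_γ ∪ B_γ`. -/
def SsetOf [LinearOrder V] [DecidableEq U] (a b : V → U) (γ : Finset V) : Set (Finset U) :=
  AsetOf a b γ ∪ BsetOf a b γ

/-- The prism `ℙ(C)` over the complex `C`, realized with `a`-vertices and `b`-vertices. -/
def prism [LinearOrder V] [DecidableEq U] (a b : V → U) (C : Set (Finset V)) :
    Set (Finset U) :=
  ⋃ γ ∈ C, SsetOf a b γ

/-- The interior simplices of the prism. -/
def prismInt [LinearOrder V] [DecidableEq U] (a b : V → U) (C : Set (Finset V)) :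
    Set (Finset U) :=
  prism a b C \ (copy a C ∪ copy b C)

/-- The complex `X̃ = Ā ∪ ℙ((A ∩ B)‾) ∪ B̄`. -/
def tilde [LinearOrder V] [DecidableEq U] (a b : V → U) (A B : Set (Finset V)) :
    Set (Finset U) :=
  copy a A ∪ prism a b (A ∩ B) ∪ copy b B

/-- The prism pairing `𝒱`: for each `γ ∈ C` and `v ∈ γ`, the pair
`([a_{i₀},…,a_{i_{r-1}}, b_{i_r},…,b_{i_q}], [a_{i₀},…,a_{i_r}, b_{i_r},…,b_{i_q}])`. -/
def prismVF [LinearOrder V] [DecidableEq U] (a b : V → U) (C : Set (Finset V)) :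
    Set (Finset U × Finset U) :=
  {p | ∃ γ ∈ C, ∃ v ∈ γ, p = (mixB a b γ v, mixA a b γ v)}

/-- `v` is the minimum vertex of `γ`. -/
def isMin [Preorder V] (γ : Finset V) (v : V) : Prop :=
  v ∈ γ ∧ ∀ u ∈ γ, v ≤ u

/-- The pairing `W'` of the interior simplices of the prism, induced by the gradient
vector field `WC` on the copy (under `c`) of the intersection complex `C`. -/
def WprimeSet [Fintype V] [LinearOrder V] [DecidableEq U] (a b c : V → U)
    (C : Set (Finset V)) (WC : Set (Finset U × Finset U)) : Set (Finset U × Finset U) :=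
  {p | ∃ pr ∈ WC, ∃ v, isMin (pull c pr.1) v ∧
      p = (mixA a b (pull c pr.1) v, mixA a b (pull c pr.2) v)} ∪
  {p | ∃ pr ∈ WC, ∃ v vm am, isMin (pull c pr.2) vm ∧ isMin (pull c pr.1) am ∧
      v ∈ pull c pr.2 ∧ v ≠ vm ∧
      p = (mixB a b (pull c pr.2) v, mixA a b (pull c pr.2) (if v = am then vm else v))} ∪
  {p | ∃ pr ∈ WC, ∃ v am, isMin (pull c pr.1) am ∧ v ∈ pull c pr.1 ∧ v ≠ am ∧
      p = (mixB a b (pull c pr.1) v, mixA a b (pull c pr.1) v)} ∪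
  {p | ∃ γ : Finset V, γ ∈ C ∧ IsCritical WC (γ.image c) ∧
      ∃ v vm, isMin γ vm ∧ v ∈ γ ∧ v ≠ vm ∧ p = (mixB a b γ v, mixA a b γ v)}

/-- The discrete vector field `W = W_Ā ∪ W_B̄ ∪ W'` on `X̃`. -/
def Wfield [Fintype V] [LinearOrder V] [DecidableEq U] (a b c : V → U)
    (C : Set (Finset V)) (WA WB WC : Set (Finset U × Finset U)) :
    Set (Finset U × Finset U) :=
  WA ∪ WB ∪ WprimeSet a b c C WC

/-- Transfer a simplex of the copy under `c` to the corresponding simplex of the copy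
under `f`. -/
def transferMap [Fintype V] [DecidableEq U] (c f : V → U) (σ : Finset U) : Finset U :=
  (pull c σ).image f

/-- A mixed (Mayer–Vietoris) trajectory: a descending extended trajectory
`τ₀, σ₁, τ₁, …, σ_p, τ_p` for `WC` in the copy of the intersection, transferred by
`tr` into another copy, followed by an ascending path
`τ'_p, α_p, τ'_{p+1}, …, α_{p+l-1}, τ'_{p+l}` for `WD`. -/
structure MixTraj (WC WD : Set (Finset U × Finset U)) (tr : Finset U → Finset U) where
  p : ℕ
  l : ℕ
  t : ℕ → Finset U
  s : ℕ → Finset U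
  t' : ℕ → Finset U
  a' : ℕ → Finset U
  dim_t : ∀ i ≤ p, (t i).card = (t 0).card
  dim_s : ∀ i, 1 ≤ i → i ≤ p → (s i).card + 1 = (t 0).card
  dim_t' : ∀ i, p ≤ i → i ≤ p + l → (t' i).card = (t 0).card
  dim_a' : ∀ i, p ≤ i → i < p + l → (a' i).card = (t 0).card + 1
  mem_s : ∀ i, 1 ≤ i → i ≤ p → (s i, t i) ∈ WC
  sub_s : ∀ i, 1 ≤ i → i ≤ p → s i ⊆ t (i - 1)
  nmem_s : ∀ i, 1 ≤ i → i ≤ p → (s i, t (i - 1)) ∉ WC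
  link : t' p = tr (t p)
  mem_a : ∀ i, p ≤ i → i < p + l → (t' i, a' i) ∈ WD
  sub_a : ∀ i, p + 1 ≤ i → i ≤ p + l → t' i ⊆ a' (i - 1)
  nmem_a : ∀ i, p + 1 ≤ i → i ≤ p + l → (t' i, a' (i - 1)) ∉ WD
  pad_t : ∀ i, p < i → t i = ∅
  pad_s : ∀ i, i = 0 ∨ p < i → s i = ∅
  pad_t' : ∀ i, i < p ∨ p + l < i → t' i = ∅
  pad_a' : ∀ i, i < p ∨ p + l ≤ i → a' i = ∅

/-- The product of incidence signs along a mixed trajectory (without the leading sign). -/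
def MixTraj.wcore [LinearOrder U] {WC WD : Set (Finset U × Finset U)}
    {tr : Finset U → Finset U} (P : MixTraj WC WD tr) : ℤ :=
  (∏ i ∈ Finset.range P.p,
      -(incidence (P.t i) (P.s (i + 1)) * incidence (P.t (i + 1)) (P.s (i + 1)))) *
  ∏ i ∈ Finset.range P.l,
      -(incidence (P.a' (P.p + i)) (P.t' (P.p + i)) *
        incidence (P.a' (P.p + i)) (P.t' (P.p + i + 1)))

/-- A Mayer–Vietoris trajectory: one of the five kinds. -/
inductive MVTraj (WA WB WC : Set (Finset U × Finset U)) (trA trB : Finset U → Finset U)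
  | viaA : ExtTraj WA → MVTraj WA WB WC trA trB
  | viaB : ExtTraj WB → MVTraj WA WB WC trA trB
  | viaC : ExtTraj WC → MVTraj WA WB WC trA trB
  | crossA : MixTraj WC WA trA → MVTraj WA WB WC trA trB
  | crossB : MixTraj WC WB trB → MVTraj WA WB WC trA trB

/-- The weight `w_M` of a Mayer–Vietoris trajectory. -/
def MVTraj.wM [LinearOrder U] {WA WB WC : Set (Finset U × Finset U)}
    {trA trB : Finset U → Finset U} : MVTraj WA WB WC trA trB → ℤ
  | .viaA P => P.weight
  | .viaB P => P.weight
  | .viaC P => -P.weight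
  | .crossA P => -P.wcore
  | .crossB P => P.wcore

/-- A Mayer–Vietoris trajectory goes from `β` to `α` (with the required criticality of
the endpoints in the respective copies `Abar`, `Bbar`, `Cbar`). -/
def MVTraj.ends {WA WB WC : Set (Finset U × Finset U)} {trA trB : Finset U → Finset U}
    (Abar Bbar Cbar : Set (Finset U)) :
    MVTraj WA WB WC trA trB → Finset U → Finset U → Prop
  | .viaA T, β, α => T.t 0 = β ∧ T.s (T.k + 1) = α ∧
      β ∈ Abar ∧ IsCritical WA β ∧ α ∈ Abar ∧ IsCritical WA α
  | .viaB T, β, α => T.t 0 = β ∧ T.s (T.k + 1) = α ∧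
      β ∈ Bbar ∧ IsCritical WB β ∧ α ∈ Bbar ∧ IsCritical WB α
  | .viaC T, β, α => T.t 0 = β ∧ T.s (T.k + 1) = α ∧
      β ∈ Cbar ∧ IsCritical WC β ∧ α ∈ Cbar ∧ IsCritical WC α
  | .crossA T, β, α => T.t 0 = β ∧ T.t' (T.p + T.l) = α ∧
      β ∈ Cbar ∧ IsCritical WC β ∧ α ∈ Abar ∧ IsCritical WA α
  | .crossB T, β, α => T.t 0 = β ∧ T.t' (T.p + T.l) = α ∧
      β ∈ Cbar ∧ IsCritical WC β ∧ α ∈ Bbar ∧ IsCritical WB α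

/-- `MV(β, α)`: the set of Mayer–Vietoris trajectories from `β` to `α`. -/
def MVset (WA WB WC : Set (Finset U × Finset U)) (trA trB : Finset U → Finset U)
    (Abar Bbar Cbar : Set (Finset U)) (β α : Finset U) :
    Set (MVTraj WA WB WC trA trB) :=
  {P | MVTraj.ends Abar Bbar Cbar P β α}

/-- The Mayer–Vietoris boundary coefficient `Σ_{P ∈ MV(β,α)} w_M(P)`. -/
def mvCoeff [LinearOrder U] (WA WB WC : Set (Finset U × Finset U))
    (trA trB : Finset U → Finset U) (Abar Bbar Cbar : Set (Finset U))
    (β α : Finset U) : ℤ :=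
  ∑ᶠ P ∈ MVset WA WB WC trA trB Abar Bbar Cbar β α, MVTraj.wM P

/-- The generating sets `D_q(X)`. -/
def Dset (Abar Bbar Cbar : Set (Finset U)) (WA WB WC : Set (Finset U × Finset U)) :
    ℕ → Set (Finset U)
  | 0 => critSet Abar WA 0 ∪ critSet Bbar WB 0
  | (q + 1) => critSet Abar WA (q + 1) ∪ critSet Bbar WB (q + 1) ∪ critSet Cbar WC q

/-- The `q`-dimensional simplices of a complex. -/
def simpSet (K : Set (Finset V)) (q : ℕ) : Set (Finset V) :=
  {σ | σ ∈ K ∧ σ.card = q + 1}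

/-- The boundary homomorphism of a chain complex of free abelian groups, determined by a
matrix of coefficients. -/
def chainBoundary {ι κ : Type*} (coeff : ι → κ → ℤ) : (ι →₀ ℤ) →ₗ[ℤ] (κ →₀ ℤ) :=
  Finsupp.lsum ℤ fun i =>
    LinearMap.toSpanSingleton ℤ (κ →₀ ℤ) (∑ᶠ j : κ, coeff i j • Finsupp.single j 1)

/-- The family of boundary maps of the chain complex of free abelian groups with
generating sets `S q` and boundary coefficients `coeff` (with the convention that the
boundary in degree `0` is the zero map). -/
def fullBoundary {W : Type*} (S : ℕ → Set (Finset W)) (coeff : Finset W → Finset W → ℤ) :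
    ∀ q : ℕ, ((S q : Set (Finset W)) →₀ ℤ) →+ ((S (q - 1) : Set (Finset W)) →₀ ℤ)
  | 0 => 0
  | (q + 1) => (chainBoundary fun (i : (S (q + 1) : Set (Finset W))) (j : (S q : Set (Finset W))) =>
      coeff (i : Finset W) (j : Finset W)).toAddMonoidHom

/-- `ker d ⧸ im d'`. -/
abbrev homologyAt {L M N : Type*} [AddCommGroup L] [AddCommGroup M] [AddCommGroup N]
    (d : M →+ N) (d' : L →+ M) : Type _ :=
  (↥d.ker) ⧸ (AddSubgroup.comap d.ker.subtype d'.range)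

/-- The `q`-th homology group of the chain complex of free abelian groups with
generating sets `S` and boundary coefficients `coeff`. -/
abbrev homologyOf {W : Type*} (S : ℕ → Set (Finset W)) (coeff : Finset W → Finset W → ℤ)
    (q : ℕ) : Type _ :=
  homologyAt (fullBoundary S coeff q) (fullBoundary S coeff (q + 1))

/-- The map `f` from critical simplices of `X̃` to generators of the Mayer–Vietoris
complex: the identity on critical simplices of `Ā` and `B̄`, and the (copy in
`(A ∩ B)‾` of the) ground simplex on interior critical simplices of the prism. -/
def fmap [Fintype V] [LinearOrder V] [DecidableEq U] (a b c : V → U)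
    (C : Set (Finset V)) (τ : Finset U) : Finset U :=
  if τ ∈ prismInt a b C then (GS a b τ).image c else τ

/-- The simplex `[a_{i₀}, b_{i₀}, …, b_{i_{q-1}}]` of the prism over `γ`. -/
def aMinCopy [Fintype V] [LinearOrder V] [DecidableEq U] (a b : V → U) (γ : Finset V) :
    Finset U :=
  (γ.filter fun u => ∀ w ∈ γ, u ≤ w).image a ∪ γ.image b

/-- The map `g` from generators of the Mayer–Vietoris complex to critical simplices of
`X̃`: the identity on critical simplices of `Ā` and `B̄`, and
`[c_{i₀},…,c_{i_{q-1}}] ↦ [a_{i₀}, b_{i₀}, …, b_{i_{q-1}}]` on critical simplices of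
`(A ∩ B)‾`. -/
def gmap [Fintype V] [LinearOrder V] [DecidableEq U] (a b c : V → U)
    (Cbar : Set (Finset U)) (α : Finset U) : Finset U :=
  if α ∈ Cbar then aMinCopy a b (pull c α) else α


section Aux
set_option linter.unusedSectionVars false

variable {V : Type*} {U : Type*} [Fintype V] [LinearOrder V] [LinearOrder U]
variable {a b c : V → U}

lemma pull_image (hc : Function.Injective c) (δ : Finset V) :
    pull c (δ.image c) = δ := by
  ext v
  simp only [pull, Finset.mem_filter, Finset.mem_univ, true_and, Finset.mem_image]
  constructor
  · rintro ⟨u, hu, h⟩; rwa [← hc h]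
  · intro hv; exact ⟨v, hv, rfl⟩

lemma mem_mixA_a (hai : Function.Injective a) (hab : ∀ u v : V, a u ≠ b v)
    {γ : Finset V} {v u : V} : a u ∈ mixA a b γ v ↔ u ∈ γ ∧ u ≤ v := by
  simp only [mixA, Finset.mem_union, Finset.mem_image, Finset.mem_filter]
  constructor
  · rintro (⟨x, ⟨hx, hxv⟩, hxe⟩ | ⟨x, _, hxe⟩)
    · rcases hai hxe with rfl; exact ⟨hx, hxv⟩
    · exact absurd hxe.symm (hab u x)
  · rintro ⟨h1, h2⟩; exact Or.inl ⟨u, ⟨h1, h2⟩, rfl⟩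

lemma mem_mixA_b (hbi : Function.Injective b) (hab : ∀ u v : V, a u ≠ b v)
    {γ : Finset V} {v u : V} : b u ∈ mixA a b γ v ↔ u ∈ γ ∧ v ≤ u := by
  simp only [mixA, Finset.mem_union, Finset.mem_image, Finset.mem_filter]
  constructor
  · rintro (⟨x, _, hxe⟩ | ⟨x, ⟨hx, hxv⟩, hxe⟩)
    · exact absurd hxe (hab x u)
    · rcases hbi hxe with rfl; exact ⟨hx, hxv⟩
  · rintro ⟨h1, h2⟩; exact Or.inr ⟨u, ⟨h1, h2⟩, rfl⟩

lemma mem_mixB_a (hai : Function.Injective a) (hab : ∀ u v : V, a u ≠ b v)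
    {γ : Finset V} {v u : V} : a u ∈ mixB a b γ v ↔ u ∈ γ ∧ u < v := by
  simp only [mixB, Finset.mem_union, Finset.mem_image, Finset.mem_filter]
  constructor
  · rintro (⟨x, ⟨hx, hxv⟩, hxe⟩ | ⟨x, _, hxe⟩)
    · rcases hai hxe with rfl; exact ⟨hx, hxv⟩
    · exact absurd hxe.symm (hab u x)
  · rintro ⟨h1, h2⟩; exact Or.inl ⟨u, ⟨h1, h2⟩, rfl⟩

lemma mem_mixB_b (hbi : Function.Injective b) (hab : ∀ u v : V, a u ≠ b v)
    {γ : Finset V} {v u : V} : b u ∈ mixB a b γ v ↔ u ∈ γ ∧ v ≤ u := by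
  simp only [mixB, Finset.mem_union, Finset.mem_image, Finset.mem_filter]
  constructor
  · rintro (⟨x, _, hxe⟩ | ⟨x, ⟨hx, hxv⟩, hxe⟩)
    · exact absurd hxe (hab x u)
    · rcases hbi hxe with rfl; exact ⟨hx, hxv⟩
  · rintro ⟨h1, h2⟩; exact Or.inr ⟨u, ⟨h1, h2⟩, rfl⟩

lemma mem_mixA_elim {γ : Finset V} {v : V} {x : U} (hx : x ∈ mixA a b γ v) :
    (∃ u, u ∈ γ ∧ u ≤ v ∧ x = a u) ∨ (∃ u, u ∈ γ ∧ v ≤ u ∧ x = b u) := by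
  simp only [mixA, Finset.mem_union, Finset.mem_image, Finset.mem_filter] at hx
  rcases hx with ⟨u, ⟨h1, h2⟩, h3⟩ | ⟨u, ⟨h1, h2⟩, h3⟩
  · exact Or.inl ⟨u, h1, h2, h3.symm⟩
  · exact Or.inr ⟨u, h1, h2, h3.symm⟩

lemma mem_mixB_elim {γ : Finset V} {v : V} {x : U} (hx : x ∈ mixB a b γ v) :
    (∃ u, u ∈ γ ∧ u < v ∧ x = a u) ∨ (∃ u, u ∈ γ ∧ v ≤ u ∧ x = b u) := by
  simp only [mixB, Finset.mem_union, Finset.mem_image, Finset.mem_filter] at hx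
  rcases hx with ⟨u, ⟨h1, h2⟩, h3⟩ | ⟨u, ⟨h1, h2⟩, h3⟩
  · exact Or.inl ⟨u, h1, h2, h3.symm⟩
  · exact Or.inr ⟨u, h1, h2, h3.symm⟩

lemma mem_GS {σ : Finset U} {x : V} : x ∈ GS a b σ ↔ a x ∈ σ ∨ b x ∈ σ := by
  simp [GS]

lemma GS_mono {σ τ : Finset U} (h : σ ⊆ τ) : GS a b σ ⊆ GS a b τ := by
  intro x hx
  rw [mem_GS] at hx ⊢
  rcases hx with h1 | h1
  · exact Or.inl (h h1)
  · exact Or.inr (h h1)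

lemma GS_mixA (hai : Function.Injective a) (hbi : Function.Injective b)
    (hab : ∀ u v : V, a u ≠ b v) {γ : Finset V} {v : V} (hv : v ∈ γ) :
    GS a b (mixA a b γ v) = γ := by
  ext x
  rw [mem_GS, mem_mixA_a hai hab, mem_mixA_b hbi hab]
  constructor
  · rintro (⟨h, _⟩ | ⟨h, _⟩) <;> exact h
  · intro hx
    rcases le_total x v with h | h
    · exact Or.inl ⟨hx, h⟩
    · exact Or.inr ⟨hx, h⟩

lemma GS_mixB (hai : Function.Injective a) (hbi : Function.Injective b)
    (hab : ∀ u v : V, a u ≠ b v) {γ : Finset V} {v : V} :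
    GS a b (mixB a b γ v) = γ := by
  ext x
  rw [mem_GS, mem_mixB_a hai hab, mem_mixB_b hbi hab]
  constructor
  · rintro (⟨h, _⟩ | ⟨h, _⟩) <;> exact h
  · intro hx
    rcases lt_or_ge x v with h | h
    · exact Or.inl ⟨hx, h⟩
    · exact Or.inr ⟨hx, h⟩

lemma filter_le_union_ge {γ : Finset V} {v : V} :
    (γ.filter fun u => u ≤ v) ∪ (γ.filter fun u => v ≤ u) = γ := by
  ext x
  simp only [Finset.mem_union, Finset.mem_filter]
  constructor
  · rintro (⟨h, _⟩ | ⟨h, _⟩) <;> exact h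
  · intro hx
    rcases le_total x v with h | h
    · exact Or.inl ⟨hx, h⟩
    · exact Or.inr ⟨hx, h⟩

lemma card_mixA (hai : Function.Injective a) (hbi : Function.Injective b)
    (hab : ∀ u v : V, a u ≠ b v) {γ : Finset V} {v : V} (hv : v ∈ γ) :
    (mixA a b γ v).card = γ.card + 1 := by
  have hdisj : Disjoint ((γ.filter fun u => u ≤ v).image a)
      ((γ.filter fun u => v ≤ u).image b) := by
    rw [Finset.disjoint_left]
    rintro x hx1 hx2
    simp only [Finset.mem_image] at hx1 hx2
    obtain ⟨u1, _, rfl⟩ := hx1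
    obtain ⟨u2, _, he⟩ := hx2
    exact hab u1 u2 he.symm
  have hi : (γ.filter fun u => u ≤ v) ∩ (γ.filter fun u => v ≤ u) = {v} := by
    ext x
    simp only [Finset.mem_inter, Finset.mem_filter, Finset.mem_singleton]
    constructor
    · rintro ⟨⟨_, h1⟩, ⟨_, h2⟩⟩; exact le_antisymm h1 h2
    · rintro rfl; exact ⟨⟨hv, le_refl _⟩, ⟨hv, le_refl _⟩⟩
  have hcu := Finset.card_union_add_card_inter (γ.filter fun u => u ≤ v)
    (γ.filter fun u => v ≤ u)
  rw [filter_le_union_ge, hi, Finset.card_singleton] at hcu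
  rw [mixA, Finset.card_union_of_disjoint hdisj,
    Finset.card_image_of_injective _ hai, Finset.card_image_of_injective _ hbi, hcu]

lemma filter_lt_union_ge {γ : Finset V} {v : V} :
    (γ.filter fun u => u < v) ∪ (γ.filter fun u => v ≤ u) = γ := by
  ext x
  simp only [Finset.mem_union, Finset.mem_filter]
  constructor
  · rintro (⟨h, _⟩ | ⟨h, _⟩) <;> exact h
  · intro hx
    rcases lt_or_ge x v with h | h
    · exact Or.inl ⟨hx, h⟩
    · exact Or.inr ⟨hx, h⟩

lemma card_mixB (hai : Function.Injective a) (hbi : Function.Injective b)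
    (hab : ∀ u v : V, a u ≠ b v) {γ : Finset V} {v : V} :
    (mixB a b γ v).card = γ.card := by
  have hdisj : Disjoint ((γ.filter fun u => u < v).image a)
      ((γ.filter fun u => v ≤ u).image b) := by
    rw [Finset.disjoint_left]
    rintro x hx1 hx2
    simp only [Finset.mem_image] at hx1 hx2
    obtain ⟨u1, _, rfl⟩ := hx1
    obtain ⟨u2, _, he⟩ := hx2
    exact hab u1 u2 he.symm
  have hi : (γ.filter fun u => u < v) ∩ (γ.filter fun u => v ≤ u) = ∅ := by
    ext x
    simp only [Finset.mem_inter, Finset.mem_filter, Finset.notMem_empty, iff_false]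
    rintro ⟨⟨_, h1⟩, ⟨_, h2⟩⟩
    exact absurd h1 (not_lt.mpr h2)
  have hcu := Finset.card_union_add_card_inter (γ.filter fun u => u < v)
    (γ.filter fun u => v ≤ u)
  rw [filter_lt_union_ge, hi, Finset.card_empty] at hcu
  rw [mixB, Finset.card_union_of_disjoint hdisj,
    Finset.card_image_of_injective _ hai, Finset.card_image_of_injective _ hbi]
  omega

lemma mixA_inj (hai : Function.Injective a) (hbi : Function.Injective b)
    (hab : ∀ u v : V, a u ≠ b v) {γ γ' : Finset V} {v v' : V}
    (hv : v ∈ γ) (hv' : v' ∈ γ') (h : mixA a b γ v = mixA a b γ' v') :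
    γ = γ' ∧ v = v' := by
  have hγ : γ = γ' := by
    rw [← GS_mixA hai hbi hab hv, ← GS_mixA hai hbi hab hv', h]
  refine ⟨hγ, ?_⟩
  have h1 : a v ∈ mixA a b γ' v' := by
    rw [← h, mem_mixA_a hai hab]; exact ⟨hv, le_refl _⟩
  have h2 : b v ∈ mixA a b γ' v' := by
    rw [← h, mem_mixA_b hbi hab]; exact ⟨hv, le_refl _⟩
  rw [mem_mixA_a hai hab] at h1
  rw [mem_mixA_b hbi hab] at h2
  exact le_antisymm h1.2 h2.2

lemma mixB_inj (hai : Function.Injective a) (hbi : Function.Injective b)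
    (hab : ∀ u v : V, a u ≠ b v) {γ γ' : Finset V} {v v' : V}
    (hv : v ∈ γ) (hv' : v' ∈ γ') (h : mixB a b γ v = mixB a b γ' v') :
    γ = γ' ∧ v = v' := by
  have hγ : γ = γ' := by
    rw [← GS_mixB hai hbi hab (γ := γ) (v := v), ← GS_mixB hai hbi hab (γ := γ') (v := v'), h]
  refine ⟨hγ, ?_⟩
  have h1 : b v ∈ mixB a b γ' v' := by
    rw [← h, mem_mixB_b hbi hab]; exact ⟨hv, le_refl _⟩
  have h2 : b v' ∈ mixB a b γ v := by
    rw [h, mem_mixB_b hbi hab]; exact ⟨hv', le_refl _⟩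
  rw [mem_mixB_b hbi hab] at h1
  rw [mem_mixB_b hbi hab] at h2
  exact le_antisymm h2.2 h1.2

lemma mixA_ne_mixB (hai : Function.Injective a) (hbi : Function.Injective b)
    (hab : ∀ u v : V, a u ≠ b v) {γ γ' : Finset V} {v v' : V} (hv : v ∈ γ) :
    mixA a b γ v ≠ mixB a b γ' v' := by
  intro h
  have h1 : a v ∈ mixB a b γ' v' := by
    rw [← h, mem_mixA_a hai hab]; exact ⟨hv, le_refl _⟩
  have h2 : b v ∈ mixB a b γ' v' := by
    rw [← h, mem_mixA_b hbi hab]; exact ⟨hv, le_refl _⟩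
  rw [mem_mixB_a hai hab] at h1
  rw [mem_mixB_b hbi hab] at h2
  exact absurd h1.2 (not_lt.mpr h2.2)

lemma mixA_mono_left {γ₁ γ₂ : Finset V} {v : V} (h : γ₁ ⊆ γ₂) :
    mixA a b γ₁ v ⊆ mixA a b γ₂ v :=
  Finset.union_subset_union
    (Finset.image_subset_image (Finset.filter_subset_filter _ h))
    (Finset.image_subset_image (Finset.filter_subset_filter _ h))

lemma isMin_unique {γ : Finset V} {u u' : V} (h : isMin γ u) (h' : isMin γ u') :
    u = u' :=
  le_antisymm (h.2 u' h'.1) (h'.2 u h.1)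

end Aux

section Aux2
set_option linter.unusedSectionVars false
set_option linter.unusedVariables false

variable {V : Type*} {U : Type*} [Fintype V] [LinearOrder V] [LinearOrder U]
variable {a b c : V → U} {C : Set (Finset V)} {WC : Set (Finset U × Finset U)}

lemma copy_out (hc : Function.Injective c) {σ : Finset U} (h : σ ∈ copy c C) :
    pull c σ ∈ C ∧ (pull c σ).image c = σ ∧ (pull c σ).card = σ.card := by
  obtain ⟨δ, hδ, rfl⟩ := h
  rw [pull_image hc]
  exact ⟨hδ, rfl, (Finset.card_image_of_injective _ hc).symm⟩

lemma pull_mono {σ τ : Finset U} (h : σ ⊆ τ) : pull c σ ⊆ pull c τ := by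
  intro x hx
  simp only [pull, Finset.mem_filter, Finset.mem_univ, true_and] at hx ⊢
  exact h hx

lemma WC_pair_facts (hc : Function.Injective c) (hWC : IsDVF (copy c C) WC)
    {pr : Finset U × Finset U} (hpr : pr ∈ WC) :
    pull c pr.1 ∈ C ∧ pull c pr.2 ∈ C ∧ (pull c pr.1).image c = pr.1 ∧
    (pull c pr.2).image c = pr.2 ∧ pull c pr.1 ⊆ pull c pr.2 ∧
    (pull c pr.2).card = (pull c pr.1).card + 1 := by
  obtain ⟨h1, h2, hsub, hcard⟩ := hWC.1 pr hpr
  obtain ⟨g1, e1, c1⟩ := copy_out hc h1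
  obtain ⟨g2, e2, c2⟩ := copy_out hc h2
  exact ⟨g1, g2, e1, e2, pull_mono hsub, by omega⟩

lemma WC_eq_of_pull22 (hc : Function.Injective c) (hWC : IsDVF (copy c C) WC)
    {pr pr' : Finset U × Finset U} (hpr : pr ∈ WC) (hpr' : pr' ∈ WC)
    (h : pull c pr.2 = pull c pr'.2) : pr = pr' := by
  have e : pr.2 = pr'.2 := by
    rw [← (WC_pair_facts hc hWC hpr).2.2.2.1, ← (WC_pair_facts hc hWC hpr').2.2.2.1, h]
  exact hWC.2 pr hpr pr' hpr' (Or.inr (Or.inr (Or.inr e)))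

lemma WC_eq_of_pull11 (hc : Function.Injective c) (hWC : IsDVF (copy c C) WC)
    {pr pr' : Finset U × Finset U} (hpr : pr ∈ WC) (hpr' : pr' ∈ WC)
    (h : pull c pr.1 = pull c pr'.1) : pr = pr' := by
  have e : pr.1 = pr'.1 := by
    rw [← (WC_pair_facts hc hWC hpr).2.2.1, ← (WC_pair_facts hc hWC hpr').2.2.1, h]
  exact hWC.2 pr hpr pr' hpr' (Or.inl e)

lemma WC_false_of_pull21 (hc : Function.Injective c) (hWC : IsDVF (copy c C) WC)
    {pr pr' : Finset U × Finset U} (hpr : pr ∈ WC) (hpr' : pr' ∈ WC)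
    (h : pull c pr.2 = pull c pr'.1) : False := by
  have e : pr.2 = pr'.1 := by
    rw [← (WC_pair_facts hc hWC hpr).2.2.2.1, ← (WC_pair_facts hc hWC hpr').2.2.1, h]
  have e2 : pr = pr' := hWC.2 pr hpr pr' hpr' (Or.inr (Or.inr (Or.inl e)))
  have hcard := (hWC.1 pr hpr).2.2.2
  have hcard' := (hWC.1 pr' hpr').2.2.2
  rw [e2] at e
  rw [e] at hcard'
  omega

lemma crit_pull_ne (hc : Function.Injective c) (hWC : IsDVF (copy c C) WC)
    {γ : Finset V} (hcrit : IsCritical WC (γ.image c))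
    {pr : Finset U × Finset U} (hpr : pr ∈ WC) :
    pull c pr.1 ≠ γ ∧ pull c pr.2 ≠ γ := by
  constructor
  · intro h
    have : pr.1 = γ.image c := by rw [← (WC_pair_facts hc hWC hpr).2.2.1, h]
    exact (hcrit pr hpr).1 this
  · intro h
    have : pr.2 = γ.image c := by rw [← (WC_pair_facts hc hWC hpr).2.2.2.1, h]
    exact (hcrit pr hpr).2 this

lemma pull1_eq_erase (hc : Function.Injective c) (hWC : IsDVF (copy c C) WC)
    {pr : Finset U × Finset U} (hpr : pr ∈ WC) {vm am : V}
    (hvm : isMin (pull c pr.2) vm) (ham : isMin (pull c pr.1) am) (hne : am ≠ vm) :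
    vm ∉ pull c pr.1 ∧ pull c pr.1 = (pull c pr.2).erase vm := by
  obtain ⟨-, -, -, -, hsub, hcard⟩ := WC_pair_facts hc hWC hpr
  have hnm : vm ∉ pull c pr.1 := by
    intro hvm1
    exact hne (le_antisymm (ham.2 vm hvm1) (hvm.2 am (hsub ham.1)))
  refine ⟨hnm, ?_⟩
  have hsub' : pull c pr.1 ⊆ (pull c pr.2).erase vm := by
    intro x hx
    exact Finset.mem_erase.mpr ⟨fun h => hnm (h ▸ hx), hsub hx⟩
  refine Finset.eq_of_subset_of_card_le hsub' ?_
  rw [Finset.card_erase_of_mem hvm.1]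
  omega

lemma mixB_subset_mixA_self (hai : Function.Injective a) (hbi : Function.Injective b)
    (hab : ∀ u v : V, a u ≠ b v) {γ : Finset V} {v : V} :
    mixB a b γ v ⊆ mixA a b γ v := by
  intro x hx
  rcases mem_mixB_elim hx with ⟨u, h1, h2, rfl⟩ | ⟨u, h1, h2, rfl⟩
  · exact (mem_mixA_a hai hab).mpr ⟨h1, le_of_lt h2⟩
  · exact (mem_mixA_b hbi hab).mpr ⟨h1, h2⟩

lemma mixB_am_subset_mixA_vm (hai : Function.Injective a) (hbi : Function.Injective b)
    (hab : ∀ u v : V, a u ≠ b v) (hc : Function.Injective c)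
    (hWC : IsDVF (copy c C) WC) {pr : Finset U × Finset U} (hpr : pr ∈ WC)
    {vm am : V} (hvm : isMin (pull c pr.2) vm) (ham : isMin (pull c pr.1) am)
    (hne : am ≠ vm) :
    mixB a b (pull c pr.2) am ⊆ mixA a b (pull c pr.2) vm := by
  obtain ⟨hnm, herase⟩ := pull1_eq_erase hc hWC hpr hvm ham hne
  intro x hx
  rcases mem_mixB_elim hx with ⟨u, h1, h2, rfl⟩ | ⟨u, h1, h2, rfl⟩
  · refine (mem_mixA_a hai hab).mpr ⟨h1, ?_⟩
    by_cases hu : u = vm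
    · exact le_of_eq hu
    · exfalso
      have : u ∈ pull c pr.1 := by
        rw [herase]; exact Finset.mem_erase.mpr ⟨hu, h1⟩
      exact absurd h2 (not_lt.mpr (ham.2 u this))
  · exact (mem_mixA_b hbi hab).mpr ⟨h1, hvm.2 u h1⟩

lemma mixA_mem_prism {γ : Finset V} {v : V} (hγ : γ ∈ C) (hv : v ∈ γ) :
    mixA a b γ v ∈ prism a b C :=
  Set.mem_biUnion hγ (Or.inl ⟨v, hv, rfl⟩)

lemma mixB_mem_prism {γ : Finset V} {w : V} (hγ : γ ∈ C) (hw : w ∈ γ) :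
    mixB a b γ w ∈ prism a b C :=
  Set.mem_biUnion hγ (Or.inr (Or.inl ⟨w, hw, rfl⟩))

end Aux2

section Aux3
set_option linter.unusedSectionVars false
set_option linter.unusedVariables false

variable {V : Type*} {U : Type*} [Fintype V] [LinearOrder V] [LinearOrder U]
variable {a b c : V → U} {C : Set (Finset V)} {WC : Set (Finset U × Finset U)}

lemma Wprime_cases {p : Finset U × Finset U}
    (hp : p ∈ WprimeSet a b c C WC) :
    (∃ pr ∈ WC, ∃ v, isMin (pull c pr.1) v ∧
      p = (mixA a b (pull c pr.1) v, mixA a b (pull c pr.2) v)) ∨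
    (∃ pr ∈ WC, ∃ v vm am, isMin (pull c pr.2) vm ∧ isMin (pull c pr.1) am ∧
      v ∈ pull c pr.2 ∧ v ≠ vm ∧
      p = (mixB a b (pull c pr.2) v, mixA a b (pull c pr.2) (if v = am then vm else v))) ∨
    (∃ pr ∈ WC, ∃ v am, isMin (pull c pr.1) am ∧ v ∈ pull c pr.1 ∧ v ≠ am ∧
      p = (mixB a b (pull c pr.1) v, mixA a b (pull c pr.1) v)) ∨
    (∃ γ : Finset V, γ ∈ C ∧ IsCritical WC (γ.image c) ∧
      ∃ v vm, isMin γ vm ∧ v ∈ γ ∧ v ≠ vm ∧ p = (mixB a b γ v, mixA a b γ v)) := by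
  rcases hp with ((h | h) | h) | h
  · exact Or.inl h
  · exact Or.inr (Or.inl h)
  · exact Or.inr (Or.inr (Or.inl h))
  · exact Or.inr (Or.inr (Or.inr h))

lemma Wprime_snd_form (hai : Function.Injective a) (hbi : Function.Injective b)
    (hci : Function.Injective c) (hab : ∀ u v : V, a u ≠ b v)
    (hWC : IsDVF (copy c C) WC) {p : Finset U × Finset U}
    (hp : p ∈ WprimeSet a b c C WC) :
    ∃ γ w, γ ∈ C ∧ w ∈ γ ∧ p.2 = mixA a b γ w := by
  rcases Wprime_cases hp with ⟨pr, hpr, v, hmin, hpe⟩ |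
    ⟨pr, hpr, v, vm, am, hvm, ham, hv, hvne, hpe⟩ |
    ⟨pr, hpr, v, am, ham, hv, hvne, hpe⟩ | ⟨γ, hγ, hcrit, v, vm, hvm, hv, hvne, hpe⟩
  · obtain ⟨g1, g2, -, -, hsub, -⟩ := WC_pair_facts hci hWC hpr
    exact ⟨pull c pr.2, v, g2, hsub hmin.1, by rw [hpe]⟩
  · obtain ⟨g1, g2, -, -, hsub, -⟩ := WC_pair_facts hci hWC hpr
    refine ⟨pull c pr.2, if v = am then vm else v, g2, ?_, by rw [hpe]⟩
    split
    · exact hvm.1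
    · exact hv
  · obtain ⟨g1, g2, -, -, -, -⟩ := WC_pair_facts hci hWC hpr
    exact ⟨pull c pr.1, v, g1, hv, by rw [hpe]⟩
  · exact ⟨γ, v, hγ, hv, by rw [hpe]⟩

lemma Wprime_fst_a (hai : Function.Injective a) (hbi : Function.Injective b)
    (hab : ∀ u v : V, a u ≠ b v) {p : Finset U × Finset U}
    (hp : p ∈ WprimeSet a b c C WC) : ∃ u, a u ∈ p.1 := by
  rcases Wprime_cases hp with ⟨pr, hpr, v, hmin, hpe⟩ |
    ⟨pr, hpr, v, vm, am, hvm, ham, hv, hvne, hpe⟩ |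
    ⟨pr, hpr, v, am, ham, hv, hvne, hpe⟩ | ⟨γ, hγ, hcrit, v, vm, hvm, hv, hvne, hpe⟩
  · exact ⟨v, by rw [hpe]; exact (mem_mixA_a hai hab).mpr ⟨hmin.1, le_refl _⟩⟩
  · refine ⟨vm, by rw [hpe]; exact (mem_mixB_a hai hab).mpr ⟨hvm.1,
      lt_of_le_of_ne (hvm.2 v hv) (Ne.symm hvne)⟩⟩
  · refine ⟨am, by rw [hpe]; exact (mem_mixB_a hai hab).mpr ⟨ham.1,
      lt_of_le_of_ne (ham.2 v hv) (Ne.symm hvne)⟩⟩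
  · refine ⟨vm, by rw [hpe]; exact (mem_mixB_a hai hab).mpr ⟨hvm.1,
      lt_of_le_of_ne (hvm.2 v hv) (Ne.symm hvne)⟩⟩

lemma Wprime_fst_b (hai : Function.Injective a) (hbi : Function.Injective b)
    (hab : ∀ u v : V, a u ≠ b v) {p : Finset U × Finset U}
    (hp : p ∈ WprimeSet a b c C WC) : ∃ u, b u ∈ p.1 := by
  rcases Wprime_cases hp with ⟨pr, hpr, v, hmin, hpe⟩ |
    ⟨pr, hpr, v, vm, am, hvm, ham, hv, hvne, hpe⟩ |
    ⟨pr, hpr, v, am, ham, hv, hvne, hpe⟩ | ⟨γ, hγ, hcrit, v, vm, hvm, hv, hvne, hpe⟩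
  · exact ⟨v, by rw [hpe]; exact (mem_mixA_b hbi hab).mpr ⟨hmin.1, le_refl _⟩⟩
  · exact ⟨v, by rw [hpe]; exact (mem_mixB_b hbi hab).mpr ⟨hv, le_refl _⟩⟩
  · exact ⟨v, by rw [hpe]; exact (mem_mixB_b hbi hab).mpr ⟨hv, le_refl _⟩⟩
  · exact ⟨v, by rw [hpe]; exact (mem_mixB_b hbi hab).mpr ⟨hv, le_refl _⟩⟩

lemma Wprime_snd_a (hai : Function.Injective a) (hbi : Function.Injective b)
    (hci : Function.Injective c) (hab : ∀ u v : V, a u ≠ b v)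
    (hWC : IsDVF (copy c C) WC) {p : Finset U × Finset U}
    (hp : p ∈ WprimeSet a b c C WC) : (∃ u, a u ∈ p.2) ∧ (∃ u, b u ∈ p.2) := by
  obtain ⟨γ, w, hγ, hw, he⟩ := Wprime_snd_form hai hbi hci hab hWC hp
  rw [he]
  exact ⟨⟨w, (mem_mixA_a hai hab).mpr ⟨hw, le_refl _⟩⟩,
    ⟨w, (mem_mixA_b hbi hab).mpr ⟨hw, le_refl _⟩⟩⟩

lemma Wprime_pair_basic (hai : Function.Injective a) (hbi : Function.Injective b)
    (hci : Function.Injective c) (hab : ∀ u v : V, a u ≠ b v)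
    (hWC : IsDVF (copy c C) WC) {p : Finset U × Finset U}
    (hp : p ∈ WprimeSet a b c C WC) :
    p.1 ∈ prism a b C ∧ p.2 ∈ prism a b C ∧ p.1 ⊆ p.2 ∧ p.2.card = p.1.card + 1 := by
  rcases Wprime_cases hp with ⟨pr, hpr, v, hmin, hpe⟩ |
    ⟨pr, hpr, v, vm, am, hvm, ham, hv, hvne, hpe⟩ |
    ⟨pr, hpr, v, am, ham, hv, hvne, hpe⟩ | ⟨γ, hγ, hcrit, v, vm, hvm, hv, hvne, hpe⟩
  · obtain ⟨g1, g2, -, -, hsub, hcard⟩ := WC_pair_facts hci hWC hpr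
    rw [hpe]
    refine ⟨mixA_mem_prism g1 hmin.1, mixA_mem_prism g2 (hsub hmin.1),
      mixA_mono_left hsub, ?_⟩
    rw [card_mixA hai hbi hab hmin.1, card_mixA hai hbi hab (hsub hmin.1), hcard]
  · obtain ⟨g1, g2, -, -, hsub, hcard⟩ := WC_pair_facts hci hWC hpr
    rw [hpe]
    have hpiv : (if v = am then vm else v) ∈ pull c pr.2 := by
      split
      · exact hvm.1
      · exact hv
    refine ⟨mixB_mem_prism g2 hv, mixA_mem_prism g2 hpiv, ?_, ?_⟩
    · by_cases hva : v = am
      · rw [if_pos hva, hva]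
        exact mixB_am_subset_mixA_vm hai hbi hab hci hWC hpr hvm ham (hva ▸ hvne)
      · rw [if_neg hva]
        exact mixB_subset_mixA_self hai hbi hab
    · rw [card_mixA hai hbi hab hpiv, card_mixB hai hbi hab]
  · obtain ⟨g1, g2, -, -, -, -⟩ := WC_pair_facts hci hWC hpr
    rw [hpe]
    refine ⟨mixB_mem_prism g1 hv, mixA_mem_prism g1 hv,
      mixB_subset_mixA_self hai hbi hab, ?_⟩
    rw [card_mixA hai hbi hab hv, card_mixB hai hbi hab]
  · rw [hpe]
    refine ⟨mixB_mem_prism hγ hv, mixA_mem_prism hγ hv,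
      mixB_subset_mixA_self hai hbi hab, ?_⟩
    rw [card_mixA hai hbi hab hv, card_mixB hai hbi hab]

lemma Wprime_fst_ne_snd (hai : Function.Injective a) (hbi : Function.Injective b)
    (hci : Function.Injective c) (hab : ∀ u v : V, a u ≠ b v)
    (hWC : IsDVF (copy c C) WC) {p p' : Finset U × Finset U}
    (hp : p ∈ WprimeSet a b c C WC) (hp' : p' ∈ WprimeSet a b c C WC) :
    p.1 ≠ p'.2 := by
  intro h
  rcases Wprime_cases hp with ⟨pr, hpr, v, hmin, hpe⟩ |
    ⟨pr, hpr, v, vm, am, hvm, ham, hv, hvne, hpe⟩ |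
    ⟨pr, hpr, v, am, ham, hv, hvne, hpe⟩ | ⟨γ, hγ, hcrit, v, vm, hvm, hv, hvne, hpe⟩
  · -- p.1 = mixA (pull pr.1) v with isMin v
    rw [hpe] at h
    simp only at h
    rcases Wprime_cases hp' with ⟨pr', hpr', v', hmin', hpe'⟩ |
      ⟨pr', hpr', v', vm', am', hvm', ham', hv', hvne', hpe'⟩ |
      ⟨pr', hpr', v', am', ham', hv', hvne', hpe'⟩ |
      ⟨γ', hγ', hcrit', v', vm', hvm', hv', hvne', hpe'⟩
    · rw [hpe'] at h
      simp only at h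
      obtain ⟨-, -, -, -, hsub', -⟩ := WC_pair_facts hci hWC hpr'
      obtain ⟨e, -⟩ := mixA_inj hai hbi hab hmin.1 (hsub' hmin'.1) h
      exact WC_false_of_pull21 hci hWC hpr' hpr e.symm
    · rw [hpe'] at h
      simp only at h
      have hpiv : (if v' = am' then vm' else v') ∈ pull c pr'.2 := by
        split
        · exact hvm'.1
        · exact hv'
      obtain ⟨e, -⟩ := mixA_inj hai hbi hab hmin.1 hpiv h
      exact WC_false_of_pull21 hci hWC hpr' hpr e.symm
    · rw [hpe'] at h
      simp only at h
      obtain ⟨e, epv⟩ := mixA_inj hai hbi hab hmin.1 hv' h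
      have epr : pr = pr' := WC_eq_of_pull11 hci hWC hpr hpr' e
      rw [epr] at hmin
      have : v = am' := isMin_unique hmin ham'
      exact hvne' (by rw [← epv]; exact this)
    · rw [hpe'] at h
      simp only at h
      obtain ⟨e, -⟩ := mixA_inj hai hbi hab hmin.1 hv' h
      exact (crit_pull_ne hci hWC hcrit' hpr).1 e
  all_goals {
    obtain ⟨γ'', w'', hγ'', hw'', he''⟩ := Wprime_snd_form hai hbi hci hab hWC hp'
    rw [hpe, he''] at h
    simp only at h
    exact mixA_ne_mixB hai hbi hab hw'' h.symm
  }

lemma Wprime_fst_eq (hai : Function.Injective a) (hbi : Function.Injective b)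
    (hci : Function.Injective c) (hab : ∀ u v : V, a u ≠ b v)
    (hWC : IsDVF (copy c C) WC) {p p' : Finset U × Finset U}
    (hp : p ∈ WprimeSet a b c C WC) (hp' : p' ∈ WprimeSet a b c C WC)
    (h : p.1 = p'.1) : p = p' := by
  rcases Wprime_cases hp with ⟨pr, hpr, v, hmin, hpe⟩ |
    ⟨pr, hpr, v, vm, am, hvm, ham, hv, hvne, hpe⟩ |
    ⟨pr, hpr, v, am, ham, hv, hvne, hpe⟩ | ⟨γ, hγ, hcrit, v, vm, hvm, hv, hvne, hpe⟩ <;>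
    rcases Wprime_cases hp' with ⟨pr', hpr', v', hmin', hpe'⟩ |
      ⟨pr', hpr', v', vm', am', hvm', ham', hv', hvne', hpe'⟩ |
      ⟨pr', hpr', v', am', ham', hv', hvne', hpe'⟩ |
      ⟨γ', hγ', hcrit', v', vm', hvm', hv', hvne', hpe'⟩ <;>
    rw [hpe, hpe'] at h ⊢ <;> simp only at h
  -- (S1,S1)
  · obtain ⟨e, epv⟩ := mixA_inj hai hbi hab hmin.1 hmin'.1 h
    have epr : pr = pr' := WC_eq_of_pull11 hci hWC hpr hpr' e
    rw [epr, epv]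
  -- (S1,S2)
  · exact absurd h (mixA_ne_mixB hai hbi hab hmin.1)
  -- (S1,S3)
  · exact absurd h (mixA_ne_mixB hai hbi hab hmin.1)
  -- (S1,S4)
  · exact absurd h (mixA_ne_mixB hai hbi hab hmin.1)
  -- (S2,S1)
  · exact absurd h.symm (mixA_ne_mixB hai hbi hab hmin'.1)
  -- (S2,S2)
  · obtain ⟨e, epv⟩ := mixB_inj hai hbi hab hv hv' h
    have epr : pr = pr' := WC_eq_of_pull22 hci hWC hpr hpr' e
    subst epr
    have e1 : vm = vm' := isMin_unique hvm hvm'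
    have e2 : am = am' := isMin_unique ham ham'
    rw [epv, e1, e2]
  -- (S2,S3)
  · obtain ⟨e, -⟩ := mixB_inj hai hbi hab hv hv' h
    exact absurd e (fun e => WC_false_of_pull21 hci hWC hpr hpr' e)
  -- (S2,S4)
  · obtain ⟨e, -⟩ := mixB_inj hai hbi hab hv hv' h
    exact absurd e (crit_pull_ne hci hWC hcrit' hpr).2
  -- (S3,S1)
  · exact absurd h.symm (mixA_ne_mixB hai hbi hab hmin'.1)
  -- (S3,S2)
  · obtain ⟨e, -⟩ := mixB_inj hai hbi hab hv hv' h
    exact absurd e.symm (fun e => WC_false_of_pull21 hci hWC hpr' hpr e)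
  -- (S3,S3)
  · obtain ⟨e, epv⟩ := mixB_inj hai hbi hab hv hv' h
    have epr : pr = pr' := WC_eq_of_pull11 hci hWC hpr hpr' e
    rw [epr, epv]
  -- (S3,S4)
  · obtain ⟨e, -⟩ := mixB_inj hai hbi hab hv hv' h
    exact absurd e (crit_pull_ne hci hWC hcrit' hpr).1
  -- (S4,S1)
  · exact absurd h.symm (mixA_ne_mixB hai hbi hab hmin'.1)
  -- (S4,S2)
  · obtain ⟨e, -⟩ := mixB_inj hai hbi hab hv hv' h
    exact absurd e.symm (crit_pull_ne hci hWC hcrit hpr').2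
  -- (S4,S3)
  · obtain ⟨e, -⟩ := mixB_inj hai hbi hab hv hv' h
    exact absurd e.symm (crit_pull_ne hci hWC hcrit hpr').1
  -- (S4,S4)
  · obtain ⟨e, epv⟩ := mixB_inj hai hbi hab hv hv' h
    rw [e, epv]

lemma Wprime_snd_eq (hai : Function.Injective a) (hbi : Function.Injective b)
    (hci : Function.Injective c) (hab : ∀ u v : V, a u ≠ b v)
    (hWC : IsDVF (copy c C) WC) {p p' : Finset U × Finset U}
    (hp : p ∈ WprimeSet a b c C WC) (hp' : p' ∈ WprimeSet a b c C WC)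
    (h : p.2 = p'.2) : p = p' := by
  rcases Wprime_cases hp with ⟨pr, hpr, v, hmin, hpe⟩ |
    ⟨pr, hpr, v, vm, am, hvm, ham, hv, hvne, hpe⟩ |
    ⟨pr, hpr, v, am, ham, hv, hvne, hpe⟩ | ⟨γ, hγ, hcrit, v, vm, hvm, hv, hvne, hpe⟩ <;>
    rcases Wprime_cases hp' with ⟨pr', hpr', v', hmin', hpe'⟩ |
      ⟨pr', hpr', v', vm', am', hvm', ham', hv', hvne', hpe'⟩ |
      ⟨pr', hpr', v', am', ham', hv', hvne', hpe'⟩ |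
      ⟨γ', hγ', hcrit', v', vm', hvm', hv', hvne', hpe'⟩ <;>
    rw [hpe, hpe'] at h ⊢ <;> simp only at h
  -- (S1,S1)
  · obtain ⟨-, -, -, -, hsub, -⟩ := WC_pair_facts hci hWC hpr
    obtain ⟨-, -, -, -, hsub', -⟩ := WC_pair_facts hci hWC hpr'
    obtain ⟨e, epv⟩ := mixA_inj hai hbi hab (hsub hmin.1) (hsub' hmin'.1) h
    have epr : pr = pr' := WC_eq_of_pull22 hci hWC hpr hpr' e
    rw [epr, epv]
  -- (S1,S2)
  · obtain ⟨-, -, -, -, hsub, -⟩ := WC_pair_facts hci hWC hpr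
    have hpiv' : (if v' = am' then vm' else v') ∈ pull c pr'.2 := by
      split
      · exact hvm'.1
      · exact hv'
    obtain ⟨e, epv⟩ := mixA_inj hai hbi hab (hsub hmin.1) hpiv' h
    have epr : pr = pr' := WC_eq_of_pull22 hci hWC hpr hpr' e
    subst epr
    have e2 : v = am' := isMin_unique hmin ham'
    exfalso
    by_cases hva : v' = am'
    · rw [if_pos hva] at epv
      exact hvne' (by rw [hva, ← e2, epv])
    · rw [if_neg hva] at epv
      exact hva (by rw [← epv, e2])
  -- (S1,S3)
  · obtain ⟨-, -, -, -, hsub, -⟩ := WC_pair_facts hci hWC hpr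
    obtain ⟨e, -⟩ := mixA_inj hai hbi hab (hsub hmin.1) hv' h
    exact absurd e (fun e => WC_false_of_pull21 hci hWC hpr hpr' e)
  -- (S1,S4)
  · obtain ⟨-, -, -, -, hsub, -⟩ := WC_pair_facts hci hWC hpr
    obtain ⟨e, -⟩ := mixA_inj hai hbi hab (hsub hmin.1) hv' h
    exact absurd e (crit_pull_ne hci hWC hcrit' hpr).2
  -- (S2,S1)
  · obtain ⟨-, -, -, -, hsub', -⟩ := WC_pair_facts hci hWC hpr'
    have hpiv : (if v = am then vm else v) ∈ pull c pr.2 := by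
      split
      · exact hvm.1
      · exact hv
    obtain ⟨e, epv⟩ := mixA_inj hai hbi hab hpiv (hsub' hmin'.1) h
    have epr : pr = pr' := WC_eq_of_pull22 hci hWC hpr hpr' e
    subst epr
    have e2 : v' = am := isMin_unique hmin' ham
    exfalso
    by_cases hva : v = am
    · rw [if_pos hva] at epv
      exact hvne (by rw [hva, ← e2]; exact epv.symm)
    · rw [if_neg hva] at epv
      exact hva (by rw [epv]; exact e2)
  -- (S2,S2)
  · have hpiv : (if v = am then vm else v) ∈ pull c pr.2 := by
      split
      · exact hvm.1
      · exact hv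
    have hpiv' : (if v' = am' then vm' else v') ∈ pull c pr'.2 := by
      split
      · exact hvm'.1
      · exact hv'
    obtain ⟨e, epv⟩ := mixA_inj hai hbi hab hpiv hpiv' h
    have epr : pr = pr' := WC_eq_of_pull22 hci hWC hpr hpr' e
    subst epr
    have e1 : vm = vm' := isMin_unique hvm hvm'
    have e2 : am = am' := isMin_unique ham ham'
    subst e1; subst e2
    have ev : v = v' := by
      by_cases h1 : v = am <;> by_cases h2 : v' = am
      · rw [h1, h2]
      · rw [if_pos h1, if_neg h2] at epv
        exact absurd epv.symm hvne'
      · rw [if_neg h1, if_pos h2] at epv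
        exact absurd epv hvne
      · rwa [if_neg h1, if_neg h2] at epv
    rw [ev]
  -- (S2,S3)
  · have hpiv : (if v = am then vm else v) ∈ pull c pr.2 := by
      split
      · exact hvm.1
      · exact hv
    obtain ⟨e, -⟩ := mixA_inj hai hbi hab hpiv hv' h
    exact absurd e (fun e => WC_false_of_pull21 hci hWC hpr hpr' e)
  -- (S2,S4)
  · have hpiv : (if v = am then vm else v) ∈ pull c pr.2 := by
      split
      · exact hvm.1
      · exact hv
    obtain ⟨e, -⟩ := mixA_inj hai hbi hab hpiv hv' h
    exact absurd e (crit_pull_ne hci hWC hcrit' hpr).2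
  -- (S3,S1)
  · obtain ⟨-, -, -, -, hsub', -⟩ := WC_pair_facts hci hWC hpr'
    obtain ⟨e, -⟩ := mixA_inj hai hbi hab hv (hsub' hmin'.1) h
    exact absurd e.symm (fun e => WC_false_of_pull21 hci hWC hpr' hpr e)
  -- (S3,S2)
  · have hpiv' : (if v' = am' then vm' else v') ∈ pull c pr'.2 := by
      split
      · exact hvm'.1
      · exact hv'
    obtain ⟨e, -⟩ := mixA_inj hai hbi hab hv hpiv' h
    exact absurd e.symm (fun e => WC_false_of_pull21 hci hWC hpr' hpr e)
  -- (S3,S3)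
  · obtain ⟨e, epv⟩ := mixA_inj hai hbi hab hv hv' h
    have epr : pr = pr' := WC_eq_of_pull11 hci hWC hpr hpr' e
    rw [epr, epv]
  -- (S3,S4)
  · obtain ⟨e, -⟩ := mixA_inj hai hbi hab hv hv' h
    exact absurd e (crit_pull_ne hci hWC hcrit' hpr).1
  -- (S4,S1)
  · obtain ⟨-, -, -, -, hsub', -⟩ := WC_pair_facts hci hWC hpr'
    obtain ⟨e, -⟩ := mixA_inj hai hbi hab hv (hsub' hmin'.1) h
    exact absurd e.symm (crit_pull_ne hci hWC hcrit hpr').2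
  -- (S4,S2)
  · have hpiv' : (if v' = am' then vm' else v') ∈ pull c pr'.2 := by
      split
      · exact hvm'.1
      · exact hv'
    obtain ⟨e, -⟩ := mixA_inj hai hbi hab hv hpiv' h
    exact absurd e.symm (crit_pull_ne hci hWC hcrit hpr').2
  -- (S4,S3)
  · obtain ⟨e, -⟩ := mixA_inj hai hbi hab hv hv' h
    exact absurd e.symm (crit_pull_ne hci hWC hcrit hpr').1
  -- (S4,S4)
  · obtain ⟨e, epv⟩ := mixA_inj hai hbi hab hv hv' h
    rw [e, epv]

end Aux3

/-- One step of the exit relation for `WC`-trajectories. -/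
def Rho {U : Type*} (WC : Set (Finset U × Finset U)) (x y : Finset U) : Prop :=
  ∃ s, s ⊆ x ∧ s.card + 1 = x.card ∧ (s, y) ∈ WC ∧ (s, x) ∉ WC

/-- The data recorded after a "drop" move inside one prism block. -/
def DropData {V : Type*} {U : Type*} [Fintype V] [LinearOrder V] [DecidableEq U]
    (c : V → U) (WC : Set (Finset U × Finset U)) (γ : Finset V) (vm : V) : Prop :=
  ∃ pr ∈ WC, pull c pr.2 = γ ∧ isMin γ vm ∧ vm ∉ pull c pr.1

section Aux4
set_option linter.unusedSectionVars false
set_option linter.unusedVariables false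

variable {V : Type*} {U : Type*} [Fintype V] [LinearOrder V] [LinearOrder U]
variable {a b c : V → U} {C : Set (Finset V)} {WC : Set (Finset U × Finset U)}

lemma sub_mixB_mixA (hai : Function.Injective a) (hbi : Function.Injective b)
    (hab : ∀ u v : V, a u ≠ b v) {γ2 γ : Finset V} {w v : V}
    (hw : w ∈ γ2) (hv : v ∈ γ)
    (hsub : mixB a b γ2 w ⊆ mixA a b γ v)
    (hcard : (mixB a b γ2 w).card + 1 = (mixA a b γ v).card) :
    γ2 = γ := by
  have h1 : γ2 ⊆ γ := by
    have := GS_mono (a := a) (b := b) hsub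
    rwa [GS_mixB hai hbi hab, GS_mixA hai hbi hab hv] at this
  refine Finset.eq_of_subset_of_card_le h1 ?_
  rw [card_mixB hai hbi hab, card_mixA hai hbi hab hv] at hcard
  omega

lemma step_S1 (hai : Function.Injective a) (hbi : Function.Injective b)
    (hci : Function.Injective c) (hab : ∀ u v : V, a u ≠ b v)
    (hWC : IsDVF (copy c C) WC)
    {pr : Finset U × Finset U} (hpr : pr ∈ WC) {v₁ : V}
    (hmin : isMin (pull c pr.1) v₁)
    {γ : Finset V} {v : V} (hγ : γ ∈ C) (hv : v ∈ γ)
    {γ' : Finset V} {v' : V} (hv' : v' ∈ γ')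
    (hσsub : mixA a b (pull c pr.1) v₁ ⊆ mixA a b γ v)
    (hγcard : (pull c pr.1).card + 1 = γ.card)
    (hτeq : mixA a b (pull c pr.2) v₁ = mixA a b γ' v')
    (hnmem : (mixA a b (pull c pr.1) v₁, mixA a b γ v) ∉ WprimeSet a b c C WC) :
    Rho WC (γ.image c) (γ'.image c) := by
  obtain ⟨g1, g2, e1, e2, hsub12, hcard12⟩ := WC_pair_facts hci hWC hpr
  -- pivot equality v₁ = v
  have hva : a v₁ ∈ mixA a b γ v :=
    hσsub ((mem_mixA_a hai hab).mpr ⟨hmin.1, le_refl _⟩)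
  have hvb : b v₁ ∈ mixA a b γ v :=
    hσsub ((mem_mixA_b hbi hab).mpr ⟨hmin.1, le_refl _⟩)
  rw [mem_mixA_a hai hab] at hva
  rw [mem_mixA_b hbi hab] at hvb
  have hpv : v₁ = v := le_antisymm hva.2 hvb.2
  -- γ₁ ⊆ γ
  have hγ1γ : pull c pr.1 ⊆ γ := by
    have := GS_mono (a := a) (b := b) hσsub
    rwa [GS_mixA hai hbi hab hmin.1, GS_mixA hai hbi hab hv] at this
  -- identify γ' with pull pr.2
  obtain ⟨eγ, epv⟩ := mixA_inj hai hbi hab (hsub12 hmin.1) hv' hτeq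
  refine ⟨pr.1, ?_, ?_, ?_, ?_⟩
  · rw [← e1]
    exact Finset.image_subset_image hγ1γ
  · have c1 := congrArg Finset.card e1
    rw [Finset.card_image_of_injective _ hci] at c1
    rw [Finset.card_image_of_injective _ hci]
    omega
  · have : γ'.image c = pr.2 := by rw [← eγ, e2]
    rw [this, Prod.mk.eta]
    exact hpr
  · intro hmem2
    have hpair : pr = (pr.1, γ.image c) :=
      hWC.2 pr hpr (pr.1, Finset.image c γ) hmem2 (Or.inl rfl)
    have hpr2 : pull c pr.2 = γ := by
      rw [show pr.2 = γ.image c from congrArg Prod.snd hpair, pull_image hci]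
    apply hnmem
    refine Or.inl (Or.inl (Or.inl ⟨pr, hpr, v₁, hmin, ?_⟩))
    rw [hpr2, hpv]

lemma step_main (hai : Function.Injective a) (hbi : Function.Injective b)
    (hci : Function.Injective c) (hab : ∀ u v : V, a u ≠ b v)
    (hWC : IsDVF (copy c C) WC)
    {σ τ' : Finset U} {γ γ' : Finset V} {v v' : V}
    (hγ : γ ∈ C) (hv : v ∈ γ) (hv' : v' ∈ γ')
    (hmem : (σ, τ') ∈ WprimeSet a b c C WC)
    (hτ' : τ' = mixA a b γ' v')
    (hsub : σ ⊆ mixA a b γ v)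
    (hcard : σ.card + 1 = (mixA a b γ v).card)
    (hnmem : (σ, mixA a b γ v) ∉ WprimeSet a b c C WC) :
    Rho WC (γ.image c) (γ'.image c) ∨
    (γ' = γ ∧ v < v') ∨
    (γ' = γ ∧ v' < v ∧ DropData c WC γ v') := by
  rcases Wprime_cases hmem with ⟨pr, hpr, v₁, hmin, hpe⟩ |
    ⟨pr, hpr, w, vm, am, hvm, ham, hw, hwne, hpe⟩ |
    ⟨pr, hpr, w, am, ham, hw, hwne, hpe⟩ | ⟨γ₄, hγ₄, hcrit, w, vm, hvm, hw, hwne, hpe⟩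
  · -- S1 : Rho step
    have hσe : σ = mixA a b (pull c pr.1) v₁ := congrArg Prod.fst hpe
    have hτe : τ' = mixA a b (pull c pr.2) v₁ := congrArg Prod.snd hpe
    rw [hσe] at hsub hcard hnmem
    rw [hτ'] at hτe
    left
    refine step_S1 hai hbi hci hab hWC hpr hmin hγ hv hv' hsub ?_ hτe.symm hnmem
    obtain ⟨-, -, -, -, -, -⟩ := WC_pair_facts hci hWC hpr
    rw [card_mixA hai hbi hab hmin.1, card_mixA hai hbi hab hv] at hcard
    omega
  · -- S2
    have hσe : σ = mixB a b (pull c pr.2) w := congrArg Prod.fst hpe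
    have hτe : τ' = mixA a b (pull c pr.2) (if w = am then vm else w) :=
      congrArg Prod.snd hpe
    rw [hσe] at hsub hcard hnmem
    have hγ2γ : pull c pr.2 = γ := sub_mixB_mixA hai hbi hab hw hv hsub hcard
    rw [hγ2γ] at hτe hvm hsub hnmem hw
    have hpiv : (if w = am then vm else w) ∈ γ := by
      split
      · exact hvm.1
      · exact hw
    obtain ⟨eγ, epv⟩ := mixA_inj hai hbi hab hpiv hv' (by rw [← hτe, hτ'])
    right
    by_cases hwa : w = am
    · -- drop
      rw [if_pos hwa] at epv
      right
      have hvne : v ≠ vm := by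
        intro hvvm
        apply hnmem
        refine Or.inl (Or.inl (Or.inr ⟨pr, hpr, w, vm, am, ?_, ham, ?_, hwne, ?_⟩))
        · rwa [hγ2γ]
        · rwa [hγ2γ]
        · rw [hγ2γ, if_pos hwa, hvvm]
      refine ⟨eγ.symm, ?_, ?_⟩
      · rw [← epv]
        exact lt_of_le_of_ne (hvm.2 v hv) (Ne.symm hvne)
      · rw [← epv]
        refine ⟨pr, hpr, hγ2γ, hvm, ?_⟩
        intro hvm1
        have ham2 : am ∈ γ := by
          rw [← hγ2γ]
          exact (WC_pair_facts hci hWC hpr).2.2.2.2.1 ham.1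
        apply hwne
        rw [hwa]
        exact le_antisymm (ham.2 vm hvm1) (hvm.2 am ham2)
    · rw [if_neg hwa] at epv
      left
      have hbw : b w ∈ mixA a b γ v := hsub ((mem_mixB_b hbi hab).mpr ⟨hw, le_refl _⟩)
      rw [mem_mixA_b hbi hab] at hbw
      have hvw : v ≠ w := by
        intro hvw
        apply hnmem
        refine Or.inl (Or.inl (Or.inr ⟨pr, hpr, w, vm, am, ?_, ham, ?_, hwne, ?_⟩))
        · rwa [hγ2γ]
        · rwa [hγ2γ]
        · rw [hγ2γ, if_neg hwa, hvw]
      refine ⟨eγ.symm, ?_⟩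
      rw [← epv]
      exact lt_of_le_of_ne hbw.2 hvw
  · -- S3
    have hσe : σ = mixB a b (pull c pr.1) w := congrArg Prod.fst hpe
    have hτe : τ' = mixA a b (pull c pr.1) w := congrArg Prod.snd hpe
    rw [hσe] at hsub hcard hnmem
    have hγ1γ : pull c pr.1 = γ := sub_mixB_mixA hai hbi hab hw hv hsub hcard
    rw [hγ1γ] at hτe hsub hnmem hw
    obtain ⟨eγ, epv⟩ := mixA_inj hai hbi hab hw hv' (by rw [← hτe, hτ'])
    right; left
    have hbw : b w ∈ mixA a b γ v := hsub ((mem_mixB_b hbi hab).mpr ⟨hw, le_refl _⟩)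
    rw [mem_mixA_b hbi hab] at hbw
    have hvw : v ≠ w := by
      intro hvw
      apply hnmem
      refine Or.inl (Or.inr ⟨pr, hpr, w, am, ham, ?_, hwne, ?_⟩)
      · rwa [hγ1γ]
      · rw [hγ1γ, hvw]

    refine ⟨eγ.symm, ?_⟩
    rw [← epv]
    exact lt_of_le_of_ne hbw.2 hvw
  · -- S4
    have hσe : σ = mixB a b γ₄ w := congrArg Prod.fst hpe
    have hτe : τ' = mixA a b γ₄ w := congrArg Prod.snd hpe
    rw [hσe] at hsub hcard hnmem
    have hγ4γ : γ₄ = γ := sub_mixB_mixA hai hbi hab hw hv hsub hcard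
    rw [hγ4γ] at hτe hsub hnmem hw hvm hcrit
    obtain ⟨eγ, epv⟩ := mixA_inj hai hbi hab hw hv' (by rw [← hτe, hτ'])
    right; left
    have hbw : b w ∈ mixA a b γ v := hsub ((mem_mixB_b hbi hab).mpr ⟨hw, le_refl _⟩)
    rw [mem_mixA_b hbi hab] at hbw
    have hvw : v ≠ w := by
      intro hvw
      apply hnmem
      refine Or.inr ⟨γ, hγ, hcrit, w, vm, hvm, hw, hwne, ?_⟩
      rw [hvw]
    refine ⟨eγ.symm, ?_⟩
    rw [← epv]
    exact lt_of_le_of_ne hbw.2 hvw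

lemma drop_terminal (hai : Function.Injective a) (hbi : Function.Injective b)
    (hci : Function.Injective c) (hab : ∀ u v : V, a u ≠ b v)
    (hWC : IsDVF (copy c C) WC)
    {γ : Finset V} {vm : V} (hγ : γ ∈ C)
    (hdrop : DropData c WC γ vm)
    {σ' τ'' : Finset U} {γ'' : Finset V} {v'' : V} (hv'' : v'' ∈ γ'')
    (hτ'' : τ'' = mixA a b γ'' v'')
    (hmem : (σ', τ'') ∈ WprimeSet a b c C WC)
    (hsub : σ' ⊆ mixA a b γ vm)
    (hcard : σ'.card + 1 = (mixA a b γ vm).card)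
    (hnmem : (σ', mixA a b γ vm) ∉ WprimeSet a b c C WC) :
    Rho WC (γ.image c) (γ''.image c) := by
  obtain ⟨pr, hpr, hp2, hvmmin, hvm1⟩ := hdrop
  rcases Wprime_cases hmem with ⟨pr', hpr', v₁, hmin, hpe⟩ |
    ⟨pr', hpr', w, vm', am', hvm', ham', hw, hwne, hpe⟩ |
    ⟨pr', hpr', w, am', ham', hw, hwne, hpe⟩ |
    ⟨γ₄, hγ₄, hcrit, w, vm', hvm', hw, hwne, hpe⟩
  · -- S1: a genuine Rho step
    have hσe : σ' = mixA a b (pull c pr'.1) v₁ := congrArg Prod.fst hpe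
    have hτe : τ'' = mixA a b (pull c pr'.2) v₁ := congrArg Prod.snd hpe
    rw [hσe] at hsub hcard hnmem
    rw [hτ''] at hτe
    refine step_S1 hai hbi hci hab hWC hpr' hmin hγ hvmmin.1 hv'' hsub ?_ hτe.symm hnmem
    rw [card_mixA hai hbi hab hmin.1, card_mixA hai hbi hab hvmmin.1] at hcard
    omega
  · -- S2: impossible
    exfalso
    have hσe : σ' = mixB a b (pull c pr'.2) w := congrArg Prod.fst hpe
    rw [hσe] at hsub hcard hnmem
    have hγ2γ : pull c pr'.2 = γ := sub_mixB_mixA hai hbi hab hw hvmmin.1 hsub hcard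
    have hprr : pr' = pr := WC_eq_of_pull22 hci hWC hpr' hpr (by rw [hγ2γ, hp2])
    subst hprr
    obtain ⟨-, -, -, -, hsub12, hcard12⟩ := WC_pair_facts hci hWC hpr'
    rw [hγ2γ] at hvm' hw hsub12 hcard12 hsub hnmem
    have evm : vm' = vm := isMin_unique hvm' hvmmin
    subst evm
    have herase : pull c pr'.1 = γ.erase vm' := by
      have hsub' : pull c pr'.1 ⊆ γ.erase vm' := by
        intro x hx
        exact Finset.mem_erase.mpr ⟨fun h => hvm1 (h ▸ hx), hsub12 hx⟩
      refine Finset.eq_of_subset_of_card_le hsub' ?_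
      rw [Finset.card_erase_of_mem hvm'.1]
      omega
    have ham2 : am' ∈ γ.erase vm' := herase ▸ ham'.1
    have hapart : ∀ u, u ∈ γ → u < w → u ≤ vm' := by
      intro u hu hlt
      have : a u ∈ mixA a b γ vm' := hsub ((mem_mixB_a hai hab).mpr ⟨hu, hlt⟩)
      exact ((mem_mixA_a hai hab).mp this).2
    have hwam : w = am' := by
      have h1 : am' ≤ w := ham'.2 w (by rw [herase]; exact Finset.mem_erase.mpr ⟨hwne, hw⟩)
      rcases lt_or_eq_of_le h1 with h2 | h2
      · exfalso
        have h3 : am' ≤ vm' := hapart am' (Finset.mem_of_mem_erase ham2) h2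
        have h4 : vm' ≤ am' := hvm'.2 am' (Finset.mem_of_mem_erase ham2)
        exact (Finset.mem_erase.mp ham2).1 (le_antisymm h3 h4)
      · exact h2.symm
    apply hnmem
    refine Or.inl (Or.inl (Or.inr ⟨pr', hpr', w, vm', am', ?_, ham', ?_, hwne, ?_⟩))
    · rwa [hγ2γ]
    · rwa [hγ2γ]
    · rw [hγ2γ, if_pos hwam]
  · -- S3: impossible
    exfalso
    have hσe : σ' = mixB a b (pull c pr'.1) w := congrArg Prod.fst hpe
    rw [hσe] at hsub hcard
    have hγ1γ : pull c pr'.1 = γ := sub_mixB_mixA hai hbi hab hw hvmmin.1 hsub hcard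
    exact WC_false_of_pull21 hci hWC hpr hpr' (by rw [hγ1γ, hp2])
  · -- S4: impossible
    exfalso
    have hσe : σ' = mixB a b γ₄ w := congrArg Prod.fst hpe
    rw [hσe] at hsub hcard
    have hγ4γ : γ₄ = γ := sub_mixB_mixA hai hbi hab hw hvmmin.1 hsub hcard
    exact (crit_pull_ne hci hWC (hγ4γ ▸ hcrit) hpr).2 hp2

lemma chain_contra {U' : Type*} [LinearOrder U'] {K : Set (Finset U')}
    {WCl : Set (Finset U' × Finset U')} (hWCl : IsGVF K WCl) :
    ∀ n : ℕ, ∀ g : ℕ → Finset U', g 0 = g n →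
      (∀ i, 1 ≤ i → i ≤ n → g i = g (i - 1) ∨ Rho WCl (g (i - 1)) (g i)) →
      (∃ j, 1 ≤ j ∧ j ≤ n ∧ Rho WCl (g (j - 1)) (g j)) → False := by
  intro n
  induction n using Nat.strong_induction_on with
  | _ n IH =>
  intro g hclosed hstep hex
  by_cases heq : ∃ j, 1 ≤ j ∧ j ≤ n ∧ g j = g (j - 1)
  · obtain ⟨j, hj1, hjn, hjeq⟩ := heq
    by_cases hrho : Rho WCl (g (j - 1)) (g j)
    · obtain ⟨s, hs1, hs2, hs3, hs4⟩ := hrho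
      rw [hjeq] at hs3
      exact hs4 hs3
    · -- remove the trivial step j and use the induction hypothesis
      have hn1 : 1 ≤ n := le_trans hj1 hjn
      refine IH (n - 1) (by omega) (fun i => if i < j then g i else g (i + 1)) ?_ ?_ ?_
      · -- closedness
        beta_reduce
        rw [if_pos (by omega : (0:ℕ) < j)]
        by_cases hc : n - 1 < j
        · rw [if_pos hc]
          have hjn' : j = n := by omega
          rw [hclosed, ← hjn']
          exact hjeq
        · rw [if_neg hc]
          have : n - 1 + 1 = n := by omega
          rw [this, hclosed]
      · -- steps
        intro i hi1 hin
        beta_reduce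
        by_cases h1 : i < j
        · rw [if_pos h1, if_pos (by omega : i - 1 < j)]
          exact hstep i hi1 (by omega)
        · by_cases h2 : i - 1 < j
          · -- i = j
            have hij : i = j := by omega
            rw [if_neg h1, if_pos h2]
            subst hij
            have hstep' := hstep (i + 1) (by omega) (by omega)
            rw [show i + 1 - 1 = i from by omega] at hstep'
            rcases hstep' with h | h
            · left
              rw [h]
              exact hjeq
            · right
              rw [← hjeq]
              exact h
          · rw [if_neg h1, if_neg h2]
            have hstep' := hstep (i + 1) (by omega) (by omega)
            rw [show i + 1 - 1 = i from by omega] at hstep'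
            rw [show i - 1 + 1 = i from by omega]
            exact hstep'
      · -- a Rho step survives
        obtain ⟨j₀, h1, h2, hrho₀⟩ := hex
        have hne : j₀ ≠ j := fun h => hrho (h ▸ hrho₀)
        by_cases hlt : j₀ < j
        · refine ⟨j₀, h1, by omega, ?_⟩
          beta_reduce
          rw [if_pos hlt, if_pos (by omega : j₀ - 1 < j)]
          exact hrho₀
        · have hgt : j < j₀ := by omega
          refine ⟨j₀ - 1, by omega, by omega, ?_⟩
          beta_reduce
          rw [if_neg (by omega : ¬ j₀ - 1 < j), show j₀ - 1 + 1 = j₀ from by omega]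
          by_cases hc : j₀ - 1 - 1 < j
          · rw [if_pos hc]
            have : j₀ - 1 - 1 = j - 1 := by omega
            rw [this]
            have : g (j₀ - 1) = g j := by
              congr 1
              omega
            rw [← hjeq, ← this]
            exact hrho₀
          · rw [if_neg hc, show j₀ - 1 - 1 + 1 = j₀ - 1 from by omega]
            exact hrho₀
  · -- all steps are Rho steps
    push_neg at heq
    obtain ⟨j₀, hj1, hj2, hrho₀⟩ := hex
    have hn1 : 1 ≤ n := le_trans hj1 hj2
    by_cases hn : n = 1
    · subst hn
      exact heq 1 le_rfl le_rfl (by simpa using hclosed.symm)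
    · have hn2 : 2 ≤ n := by omega
      have hall : ∀ i, 1 ≤ i → i ≤ n → Rho WCl (g (i - 1)) (g i) := by
        intro i hi1 hi2
        exact (hstep i hi1 hi2).resolve_left (heq i hi1 hi2)
      have hsel : ∀ i, ∃ s : Finset U', 1 ≤ i → i ≤ n →
          s ⊆ g (i - 1) ∧ s.card + 1 = (g (i - 1)).card ∧ (s, g i) ∈ WCl ∧
          (s, g (i - 1)) ∉ WCl := by
        intro i
        by_cases h : 1 ≤ i ∧ i ≤ n
        · obtain ⟨s, hs⟩ := hall i h.1 h.2
          exact ⟨s, fun _ _ => hs⟩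
        · exact ⟨∅, fun h1 h2 => absurd ⟨h1, h2⟩ h⟩
      choose s hs using hsel
      have hdim : ∀ i, i ≤ n → (g i).card = (g 0).card := by
        intro i
        induction i with
        | zero => intro _; rfl
        | succ m ihm =>
          intro hm
          have h1 := hs (m + 1) (by omega) hm
          have h2 := (hWCl.1.1 _ h1.2.2.1).2.2.2
          simp only at h2
          rw [show m + 1 - 1 = m from by omega] at h1
          rw [h2, h1.2.1, ihm (by omega)]
      refine hWCl.2 ⟨⟨n, g, s, hdim, ?_, ?_, ?_, ?_⟩, hn2, hclosed⟩
      · intro i hi1 hi2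
        have h1 := hs i hi1 hi2
        rw [← hdim (i - 1) (by omega)]
        exact h1.2.1
      · intro i hi1 hi2
        exact (hs i hi1 hi2).2.2.1
      · intro i hi1 hi2
        exact (hs i hi1 hi2).1
      · intro i hi1 hi2
        exact (hs i hi1 hi2).2.2.2

end Aux4

/-- The discrete vector field `W = W_Ā ∪ W_B̄ ∪ W'` on `X̃` is
acyclic, i.e. a gradient vector field on `X̃`. -/
theorem Wfield_is_gvf
    {V : Type*} {U : Type*} [Fintype V] [LinearOrder V] [LinearOrder U]
    (X A B : Set (Finset V)) (a b c : V → U)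
    (WA WB WC : Set (Finset U × Finset U))
    (hX : IsComplex X) (hA : IsComplex A) (hB : IsComplex B)
    (hUnion : A ∪ B = X)
    (ha : StrictMono a) (hb : StrictMono b) (hc : StrictMono c)
    (hab : ∀ u v : V, a u ≠ b v) (hac : ∀ u v : V, a u ≠ c v)
    (hbc : ∀ u v : V, b u ≠ c v)
    (hWA : IsGVF (copy a A) WA) (hWB : IsGVF (copy b B) WB)
    (hWC : IsGVF (copy c (A ∩ B)) WC) :
    IsGVF (tilde a b A B) (Wfield a b c (A ∩ B) WA WB WC) := by
  classical
  have hai := ha.injective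
  have hbi := hb.injective
  have hci := hc.injective
  -- basic letter-type facts
  have hAnob : ∀ σ ∈ copy a A, ∀ u, b u ∉ σ := by
    rintro σ ⟨δ, hδ, rfl⟩ u hu
    obtain ⟨y, -, hy⟩ := Finset.mem_image.mp hu
    exact hab y u hy
  have hBnoa : ∀ σ ∈ copy b B, ∀ u, a u ∉ σ := by
    rintro σ ⟨δ, hδ, rfl⟩ u hu
    obtain ⟨y, -, hy⟩ := Finset.mem_image.mp hu
    exact hab u y hy.symm
  have hBhasb : ∀ σ ∈ copy b B, ∃ u, b u ∈ σ := by
    rintro σ ⟨δ, hδ, rfl⟩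
    obtain ⟨x, hx⟩ := (hB.2 δ hδ).1
    exact ⟨x, Finset.mem_image_of_mem b hx⟩
  have hAhasa : ∀ σ ∈ copy a A, ∃ u, a u ∈ σ := by
    rintro σ ⟨δ, hδ, rfl⟩
    obtain ⟨x, hx⟩ := (hA.2 δ hδ).1
    exact ⟨x, Finset.mem_image_of_mem a hx⟩
  constructor
  · -- W is a discrete vector field on X̃
    constructor
    · intro p hp
      rcases hp with (hp | hp) | hp
      · obtain ⟨k1, k2, k3, k4⟩ := hWA.1.1 p hp
        exact ⟨Or.inl (Or.inl k1), Or.inl (Or.inl k2), k3, k4⟩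
      · obtain ⟨k1, k2, k3, k4⟩ := hWB.1.1 p hp
        exact ⟨Or.inr k1, Or.inr k2, k3, k4⟩
      · obtain ⟨k1, k2, k3, k4⟩ := Wprime_pair_basic hai hbi hci hab hWC.1 hp
        exact ⟨Or.inl (Or.inr k1), Or.inl (Or.inr k2), k3, k4⟩
    · intro p hp p' hp' hshare
      rcases hp with (hp | hp) | hp <;> rcases hp' with (hp' | hp') | hp'
      · exact hWA.1.2 p hp p' hp' hshare
      · -- WA vs WB
        exfalso
        have pA1 := (hWA.1.1 p hp).1
        have pA2 := (hWA.1.1 p hp).2.1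
        have pB1 := hBhasb _ (hWB.1.1 p' hp').1
        have pB2 := hBhasb _ (hWB.1.1 p' hp').2.1
        rcases hshare with e | e | e | e
        · obtain ⟨u, hu⟩ := pB1; rw [← e] at hu; exact hAnob _ pA1 u hu
        · obtain ⟨u, hu⟩ := pB2; rw [← e] at hu; exact hAnob _ pA1 u hu
        · obtain ⟨u, hu⟩ := pB1; rw [← e] at hu; exact hAnob _ pA2 u hu
        · obtain ⟨u, hu⟩ := pB2; rw [← e] at hu; exact hAnob _ pA2 u hu
      · -- WA vs W'
        exfalso
        have pA1 := (hWA.1.1 p hp).1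
        have pA2 := (hWA.1.1 p hp).2.1
        obtain ⟨u1, hu1⟩ := Wprime_fst_b hai hbi hab hp'
        obtain ⟨u2, hu2⟩ := (Wprime_snd_a hai hbi hci hab hWC.1 hp').2
        rcases hshare with e | e | e | e
        · rw [← e] at hu1; exact hAnob _ pA1 u1 hu1
        · rw [← e] at hu2; exact hAnob _ pA1 u2 hu2
        · rw [← e] at hu1; exact hAnob _ pA2 u1 hu1
        · rw [← e] at hu2; exact hAnob _ pA2 u2 hu2
      · -- WB vs WA
        exfalso
        have pB1 := (hWB.1.1 p hp).1
        have pB2 := (hWB.1.1 p hp).2.1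
        have pA1 := hAhasa _ (hWA.1.1 p' hp').1
        have pA2 := hAhasa _ (hWA.1.1 p' hp').2.1
        rcases hshare with e | e | e | e
        · obtain ⟨u, hu⟩ := pA1; rw [← e] at hu; exact hBnoa _ pB1 u hu
        · obtain ⟨u, hu⟩ := pA2; rw [← e] at hu; exact hBnoa _ pB1 u hu
        · obtain ⟨u, hu⟩ := pA1; rw [← e] at hu; exact hBnoa _ pB2 u hu
        · obtain ⟨u, hu⟩ := pA2; rw [← e] at hu; exact hBnoa _ pB2 u hu
      · exact hWB.1.2 p hp p' hp' hshare
      · -- WB vs W'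
        exfalso
        have pB1 := (hWB.1.1 p hp).1
        have pB2 := (hWB.1.1 p hp).2.1
        obtain ⟨u1, hu1⟩ := Wprime_fst_a hai hbi hab hp'
        obtain ⟨u2, hu2⟩ := (Wprime_snd_a hai hbi hci hab hWC.1 hp').1
        rcases hshare with e | e | e | e
        · rw [← e] at hu1; exact hBnoa _ pB1 u1 hu1
        · rw [← e] at hu2; exact hBnoa _ pB1 u2 hu2
        · rw [← e] at hu1; exact hBnoa _ pB2 u1 hu1
        · rw [← e] at hu2; exact hBnoa _ pB2 u2 hu2
      · -- W' vs WA
        exfalso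
        have pA1 := (hWA.1.1 p' hp').1
        have pA2 := (hWA.1.1 p' hp').2.1
        obtain ⟨u1, hu1⟩ := Wprime_fst_b hai hbi hab hp
        obtain ⟨u2, hu2⟩ := (Wprime_snd_a hai hbi hci hab hWC.1 hp).2
        rcases hshare with e | e | e | e
        · rw [e] at hu1; exact hAnob _ pA1 u1 hu1
        · rw [e] at hu1; exact hAnob _ pA2 u1 hu1
        · rw [e] at hu2; exact hAnob _ pA1 u2 hu2
        · rw [e] at hu2; exact hAnob _ pA2 u2 hu2
      · -- W' vs WB
        exfalso
        have pB1 := (hWB.1.1 p' hp').1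
        have pB2 := (hWB.1.1 p' hp').2.1
        obtain ⟨u1, hu1⟩ := Wprime_fst_a hai hbi hab hp
        obtain ⟨u2, hu2⟩ := (Wprime_snd_a hai hbi hci hab hWC.1 hp).1
        rcases hshare with e | e | e | e
        · rw [e] at hu1; exact hBnoa _ pB1 u1 hu1
        · rw [e] at hu1; exact hBnoa _ pB2 u1 hu1
        · rw [e] at hu2; exact hBnoa _ pB1 u2 hu2
        · rw [e] at hu2; exact hBnoa _ pB2 u2 hu2
      · -- W' vs W'
        rcases hshare with e | e | e | e
        · exact Wprime_fst_eq hai hbi hci hab hWC.1 hp hp' e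
        · exact absurd e (Wprime_fst_ne_snd hai hbi hci hab hWC.1 hp hp')
        · exact absurd e.symm (Wprime_fst_ne_snd hai hbi hci hab hWC.1 hp' hp)
        · exact Wprime_snd_eq hai hbi hci hab hWC.1 hp hp' e
  · -- W is acyclic
    rintro ⟨P, hk, hcl⟩
    -- a trajectory that hits WA stays in WA; same for WB
    have hWAstep : ∀ i, 1 ≤ i → i < P.k → (P.s i, P.t i) ∈ WA →
        (P.s (i + 1), P.t (i + 1)) ∈ WA := by
      intro i h1 h2 hi
      have ht : P.t i ∈ copy a A := (hWA.1.1 _ hi).2.1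
      have hsub : P.s (i + 1) ⊆ P.t i := by
        have := P.sub (i + 1) (by omega) (by omega)
        simpa using this
      rcases P.mem (i + 1) (by omega) (by omega) with (h | h) | h
      · exact h
      · exfalso
        obtain ⟨u, hu⟩ := hBhasb _ (hWB.1.1 _ h).1
        exact hAnob _ ht u (hsub hu)
      · exfalso
        obtain ⟨u, hu⟩ := Wprime_fst_b hai hbi hab h
        exact hAnob _ ht u (hsub hu)
    have hWAwrap : (P.s P.k, P.t P.k) ∈ WA → (P.s 1, P.t 1) ∈ WA := by
      intro hK
      have ht : P.t P.k ∈ copy a A := (hWA.1.1 _ hK).2.1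
      have hsub : P.s 1 ⊆ P.t P.k := by
        have h0 : P.s 1 ⊆ P.t 0 := by simpa using P.sub 1 (by omega) (by omega)
        rwa [hcl] at h0
      rcases P.mem 1 (by omega) (by omega) with (h | h) | h
      · exact h
      · exfalso
        obtain ⟨u, hu⟩ := hBhasb _ (hWB.1.1 _ h).1
        exact hAnob _ ht u (hsub hu)
      · exfalso
        obtain ⟨u, hu⟩ := Wprime_fst_b hai hbi hab h
        exact hAnob _ ht u (hsub hu)
    have hWAonly : ¬ ∃ i, 1 ≤ i ∧ i ≤ P.k ∧ (P.s i, P.t i) ∈ WA := by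
      rintro ⟨i₀, hi₀1, hi₀k, hi₀⟩
      have hup : ∀ j, i₀ ≤ j → j ≤ P.k → (P.s j, P.t j) ∈ WA := by
        intro j hj
        induction j, hj using Nat.le_induction with
        | base => intro _; exact hi₀
        | succ m hm ih =>
          intro h2
          exact hWAstep m (by omega) (by omega) (ih (by omega))
      have base1 : (P.s 1, P.t 1) ∈ WA := hWAwrap (hup P.k hi₀k le_rfl)
      have hallA : ∀ j, 1 ≤ j → j ≤ P.k → (P.s j, P.t j) ∈ WA := by
        intro j
        induction j with
        | zero => intro h; exact absurd h (by omega)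
        | succ m ih =>
          intro h1 h2
          by_cases hm : m = 0
          · subst hm; exact base1
          · exact hWAstep m (by omega) (by omega) (ih (by omega) (by omega))
      exact hWA.2 ⟨⟨P.k, P.t, P.s, P.dim_t, P.dim_s, hallA, P.sub,
        fun i h1 h2 hm => P.nmem i h1 h2 (Or.inl (Or.inl hm))⟩, hk, hcl⟩
    have hWBstep : ∀ i, 1 ≤ i → i < P.k → (P.s i, P.t i) ∈ WB →
        (P.s (i + 1), P.t (i + 1)) ∈ WB := by
      intro i h1 h2 hi
      have ht : P.t i ∈ copy b B := (hWB.1.1 _ hi).2.1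
      have hsub : P.s (i + 1) ⊆ P.t i := by
        have := P.sub (i + 1) (by omega) (by omega)
        simpa using this
      rcases P.mem (i + 1) (by omega) (by omega) with (h | h) | h
      · exfalso
        obtain ⟨u, hu⟩ := hAhasa _ (hWA.1.1 _ h).1
        exact hBnoa _ ht u (hsub hu)
      · exact h
      · exfalso
        obtain ⟨u, hu⟩ := Wprime_fst_a hai hbi hab h
        exact hBnoa _ ht u (hsub hu)
    have hWBwrap : (P.s P.k, P.t P.k) ∈ WB → (P.s 1, P.t 1) ∈ WB := by
      intro hK
      have ht : P.t P.k ∈ copy b B := (hWB.1.1 _ hK).2.1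
      have hsub : P.s 1 ⊆ P.t P.k := by
        have h0 : P.s 1 ⊆ P.t 0 := by simpa using P.sub 1 (by omega) (by omega)
        rwa [hcl] at h0
      rcases P.mem 1 (by omega) (by omega) with (h | h) | h
      · exfalso
        obtain ⟨u, hu⟩ := hAhasa _ (hWA.1.1 _ h).1
        exact hBnoa _ ht u (hsub hu)
      · exact h
      · exfalso
        obtain ⟨u, hu⟩ := Wprime_fst_a hai hbi hab h
        exact hBnoa _ ht u (hsub hu)
    have hWBonly : ¬ ∃ i, 1 ≤ i ∧ i ≤ P.k ∧ (P.s i, P.t i) ∈ WB := by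
      rintro ⟨i₀, hi₀1, hi₀k, hi₀⟩
      have hup : ∀ j, i₀ ≤ j → j ≤ P.k → (P.s j, P.t j) ∈ WB := by
        intro j hj
        induction j, hj using Nat.le_induction with
        | base => intro _; exact hi₀
        | succ m hm ih =>
          intro h2
          exact hWBstep m (by omega) (by omega) (ih (by omega))
      have base1 : (P.s 1, P.t 1) ∈ WB := hWBwrap (hup P.k hi₀k le_rfl)
      have hallB : ∀ j, 1 ≤ j → j ≤ P.k → (P.s j, P.t j) ∈ WB := by
        intro j
        induction j with
        | zero => intro h; exact absurd h (by omega)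
        | succ m ih =>
          intro h1 h2
          by_cases hm : m = 0
          · subst hm; exact base1
          · exact hWBstep m (by omega) (by omega) (ih (by omega) (by omega))
      exact hWB.2 ⟨⟨P.k, P.t, P.s, P.dim_t, P.dim_s, hallB, P.sub,
        fun i h1 h2 hm => P.nmem i h1 h2 (Or.inl (Or.inr hm))⟩, hk, hcl⟩
    -- hence the whole trajectory is in W'
    have hall : ∀ i, 1 ≤ i → i ≤ P.k →
        (P.s i, P.t i) ∈ WprimeSet a b c (A ∩ B) WC := by
      intro i h1 h2
      rcases P.mem i h1 h2 with (h | h) | h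
      · exact absurd ⟨i, h1, h2, h⟩ hWAonly
      · exact absurd ⟨i, h1, h2, h⟩ hWBonly
      · exact h
    -- extract the normal forms of the upper simplices
    have hsel : ∀ i, ∃ (γ : Finset V) (wv : V), 1 ≤ i → i ≤ P.k →
        γ ∈ A ∩ B ∧ wv ∈ γ ∧ P.t i = mixA a b γ wv := by
      intro i
      by_cases h : 1 ≤ i ∧ i ≤ P.k
      · obtain ⟨γ, wv, h3, h4, h5⟩ := Wprime_snd_form hai hbi hci hab hWC.1
          (hall i h.1 h.2)
        exact ⟨γ, wv, fun _ _ => ⟨h3, h4, h5⟩⟩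
      · obtain ⟨γ, wv, h3, h4, h5⟩ := Wprime_snd_form hai hbi hci hab hWC.1
          (hall 1 (by omega) (by omega))
        exact ⟨∅, wv, fun h1 h2 => absurd ⟨h1, h2⟩ h⟩
    choose g w hgw using hsel
    set G : ℕ → Finset V := fun i => if i = 0 then g P.k else g i with hGdef
    set Wf : ℕ → V := fun i => if i = 0 then w P.k else w i with hWfdef
    have hkne : P.k ≠ 0 := by omega
    have hG0 : G 0 = G P.k ∧ Wf 0 = Wf P.k := by
      constructor
      · simp [hGdef, hkne]
      · simp [hWfdef, hkne]
    have hGt : ∀ i, i ≤ P.k →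
        P.t i = mixA a b (G i) (Wf i) ∧ G i ∈ A ∩ B ∧ Wf i ∈ G i := by
      intro i hi
      by_cases h0 : i = 0
      · subst h0
        obtain ⟨k1, k2, k3⟩ := hgw P.k (by omega) le_rfl
        have e1 : G 0 = g P.k := by simp [hGdef]
        have e2 : Wf 0 = w P.k := by simp [hWfdef]
        rw [e1, e2, hcl]
        exact ⟨k3, k1, k2⟩
      · obtain ⟨k1, k2, k3⟩ := hgw i (by omega) hi
        have e1 : G i = g i := by simp [hGdef, h0]
        have e2 : Wf i = w i := by simp [hWfdef, h0]
        rw [e1, e2]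
        exact ⟨k3, k1, k2⟩
    -- per-step trichotomy
    have hstepdata : ∀ i, 1 ≤ i → i ≤ P.k →
        Rho WC ((G (i - 1)).image c) ((G i).image c) ∨
        (G i = G (i - 1) ∧ Wf (i - 1) < Wf i) ∨
        (G i = G (i - 1) ∧ Wf i < Wf (i - 1) ∧ DropData c WC (G (i - 1)) (Wf i)) := by
      intro i h1 h2
      obtain ⟨htprev, hγprev, hwprev⟩ := hGt (i - 1) (by omega)
      obtain ⟨hti, hγi, hwi⟩ := hGt i h2
      have hmm := hall i h1 h2
      have hsubi : P.s i ⊆ mixA a b (G (i - 1)) (Wf (i - 1)) := by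
        rw [← htprev]
        exact P.sub i h1 h2
      have hcardi : (P.s i).card + 1 = (mixA a b (G (i - 1)) (Wf (i - 1))).card := by
        rw [← htprev]
        have d1 := P.dim_s i h1 h2
        have d2 := P.dim_t (i - 1) (by omega)
        omega
      have hnm : (P.s i, mixA a b (G (i - 1)) (Wf (i - 1))) ∉
          WprimeSet a b c (A ∩ B) WC := by
        rw [← htprev]
        intro hcon
        exact P.nmem i h1 h2 (Or.inr hcon)
      exact step_main hai hbi hci hab hWC.1 hγprev hwprev hwi hmm hti hsubi hcardi hnm
    by_cases hex : ∃ j, 1 ≤ j ∧ j ≤ P.k ∧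
        Rho WC ((G (j - 1)).image c) ((G j).image c)
    · -- some genuine descending step: contradiction with acyclicity of WC
      refine chain_contra hWC P.k (fun i => (G i).image c) ?_ ?_ hex
      · exact congrArg (Finset.image c) hG0.1
      · intro i h1 h2
        rcases hstepdata i h1 h2 with h | h | h
        · exact Or.inr h
        · exact Or.inl (congrArg (Finset.image c) h.1)
        · exact Or.inl (congrArg (Finset.image c) h.1)
    · push_neg at hex
      by_cases hdrop : ∃ i, 1 ≤ i ∧ i ≤ P.k ∧
          (G i = G (i - 1) ∧ Wf i < Wf (i - 1) ∧ DropData c WC (G (i - 1)) (Wf i))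
      · -- a drop is terminal inside its prism block
        obtain ⟨i, hi1, hi2, hGeq, hWlt, hdd⟩ := hdrop
        obtain ⟨j, hj1, hj2, hjG, hjW, hjt⟩ :
            ∃ j, 1 ≤ j ∧ j ≤ P.k ∧ G (j - 1) = G i ∧ Wf (j - 1) = Wf i ∧
              P.t (j - 1) = P.t i := by
          by_cases hik : i = P.k
          · refine ⟨1, le_rfl, by omega, ?_, ?_, ?_⟩
            · rw [show (1:ℕ) - 1 = 0 from rfl, hik]; exact hG0.1
            · rw [show (1:ℕ) - 1 = 0 from rfl, hik]; exact hG0.2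
            · rw [show (1:ℕ) - 1 = 0 from rfl, hik]; exact hcl
          · exact ⟨i + 1, by omega, by omega, by simp, by simp, by simp⟩
        obtain ⟨hti, hγi, hwi⟩ := hGt i hi2
        obtain ⟨htj, hγj, hwj⟩ := hGt j hj2
        have hmm := hall j hj1 hj2
        have hRho := drop_terminal hai hbi hci hab hWC.1 hγi
          (by rw [hGeq]; exact hdd) hwj htj hmm
          (by rw [← hti, ← hjt]; exact P.sub j hj1 hj2)
          (by rw [← hti, ← hjt]
              have d1 := P.dim_s j hj1 hj2
              have d2 := P.dim_t (j - 1) (by omega)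
              omega)
          (by rw [← hti, ← hjt]
              intro hcon
              exact P.nmem j hj1 hj2 (Or.inr hcon))
        apply hex j hj1 hj2
        rw [hjG]
        exact hRho
      · -- otherwise the pivot strictly increases around the loop
        have hinc : ∀ i, 1 ≤ i → i ≤ P.k → Wf (i - 1) < Wf i := by
          intro i h1 h2
          rcases hstepdata i h1 h2 with h | h | h
          · exact absurd h (hex i h1 h2)
          · exact h.2
          · exact absurd ⟨i, h1, h2, h⟩ hdrop
        have hmono : ∀ i, i ≤ P.k → 1 ≤ i → Wf 0 < Wf i := by
          intro i
          induction i with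
          | zero => intro _ h; exact absurd h (by omega)
          | succ m ih =>
            intro h2 h1
            by_cases hm : m = 0
            · subst hm
              simpa using hinc 1 (by omega) (by omega)
            · have hstep := hinc (m + 1) (by omega) h2
              rw [show m + 1 - 1 = m from by omega] at hstep
              exact lt_trans (ih (by omega) (by omega)) hstep
        have hfin := hmono P.k le_rfl (by omega)
        rw [← hG0.2] at hfin
        exact lt_irrefl _ hfin

end DMT
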